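/- arXiv:2502.08394 — 4 statements merged into one kernel-verified Lean document; each statement's English description precedes it below -/
import Mathlib

section
/- For every dimension d ≥ 2, every p ∈ (0,1), every integer n ≥ 1, and every nonempty finite connected set S of edges of ℤ^d with at least one edge incident to 0, one has ℙ_p[0 ↔ ∂Λ_n] ≤ φ_p(S)^{⌊n/diam(S)⌋}. -/
open MeasureTheory

namespace Perc

/-- Vertices of `ℤ^d`. -/
abbrev Vertex (d : ℕ) := Fin d → ℤ

/-- Nearest-neighbour adjacency in `ℤ^d`: `‖x − y‖₁ = 1`. -/
def adj {d : ℕ} (x y : Vertex d) : Prop :=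
  (∑ i, (x i - y i).natAbs) = 1

/-- The unordered pair `e` is a nearest-neighbour edge of `ℤ^d`. -/
def IsEdge {d : ℕ} (e : Sym2 (Vertex d)) : Prop :=
  ∃ x y : Vertex d, adj x y ∧ e = s(x, y)

/-- The set `E` of nearest-neighbour edges of `ℤ^d`. -/
abbrev Edge (d : ℕ) := {e : Sym2 (Vertex d) // IsEdge e}

/-- Percolation configurations `ω ∈ {0,1}^E`. -/
abbrev Config (d : ℕ) := Edge d → Bool

/-- One step along an open edge of `ω`. -/
def step {d : ℕ} (ω : Config d) (x y : Vertex d) : Prop :=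
  ∃ h : adj x y, ω ⟨s(x, y), x, y, h, rfl⟩ = true

/-- `x` and `y` are joined by a path of open edges. -/
def Conn {d : ℕ} (ω : Config d) : Vertex d → Vertex d → Prop :=
  Relation.ReflTransGen (step ω)

/-- The open cluster of `x` in `ω`. -/
def cluster {d : ℕ} (ω : Config d) (x : Vertex d) : Set (Vertex d) :=
  {y | Conn ω x y}

/-- The box `Λ_n = {−n, …, n}^d`. -/
def box (d n : ℕ) : Set (Vertex d) := {x | ∀ i, |x i| ≤ (n : ℤ)}

/-- `∂Λ_n`: vertices of `Λ_n` having a nearest neighbour outside `Λ_n`. -/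
def boxBoundary (d n : ℕ) : Set (Vertex d) :=
  {x | x ∈ box d n ∧ ∃ y, adj x y ∧ y ∉ box d n}

/-- The origin of `ℤ^d`. -/
def origin (d : ℕ) : Vertex d := fun _ => 0

/-- The event `{0 ↔ ∂Λ_n}`. -/
def ZeroToBoundary (d n : ℕ) : Set (Config d) :=
  {ω | ∃ y ∈ boxBoundary d n, Conn ω (origin d) y}

/-- The event `{0 ↔ ∞}` that the open cluster of the origin is infinite. -/
def ZeroToInfinity (d : ℕ) : Set (Config d) :=
  {ω | (cluster ω (origin d)).Infinite}

/-- `μ` is the law of i.i.d. Bernoulli(p) edge variables: it is a probability measure on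
`{0,1}^E` under which every finite cylinder has the corresponding product probability. -/
def IsBernoulli (d : ℕ) (p : ℝ) (μ : Measure (Config d)) : Prop :=
  IsProbabilityMeasure μ ∧
    ∀ (s : Finset (Edge d)) (f : Edge d → Bool),
      μ {ω : Config d | ∀ e ∈ s, ω e = f e} =
        ENNReal.ofReal (∏ e ∈ s, if f e then p else 1 - p)

/-- `x` is an endpoint of an edge of `S`. -/
def touches {d : ℕ} (S : Finset (Edge d)) (x : Vertex d) : Prop :=
  ∃ e ∈ S, x ∈ (e : Sym2 (Vertex d))

/-- One step along an edge of `S`. -/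
def SStep {d : ℕ} (S : Finset (Edge d)) (x y : Vertex d) : Prop :=
  ∃ e ∈ S, (e : Sym2 (Vertex d)) = s(x, y)

/-- `S` is connected: the union of the edges of `S` is a connected subgraph. -/
def SConnected {d : ℕ} (S : Finset (Edge d)) : Prop :=
  ∀ x y : Vertex d, touches S x → touches S y → Relation.ReflTransGen (SStep S) x y

/-- `∂S`: vertices that are an endpoint both of an edge of `S` and of an edge not in `S`. -/
def edgeBoundary {d : ℕ} (S : Finset (Edge d)) : Set (Vertex d) :=
  {u | touches S u ∧ ∃ e : Edge d, e ∉ S ∧ u ∈ (e : Sym2 (Vertex d))}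

/-- `x` and `y` are joined by a path of open edges all belonging to `S`. -/
def ConnInS {d : ℕ} (S : Finset (Edge d)) (ω : Config d) (x y : Vertex d) : Prop :=
  Relation.ReflTransGen
    (fun a b => ∃ e ∈ S, ω e = true ∧ (e : Sym2 (Vertex d)) = s(a, b)) x y

/-- `L∞` distance between two vertices of `ℤ^d`. -/
def distLinf {d : ℕ} (x y : Vertex d) : ℕ :=
  Finset.univ.sup fun i => (x i - y i).natAbs

/-- `diam(S)`: maximal `L∞` distance between endpoints of edges of `S`. -/
noncomputable def diamS {d : ℕ} (S : Finset (Edge d)) : ℕ :=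
  sSup {k : ℕ | ∃ x y : Vertex d, touches S x ∧ touches S y ∧ distLinf x y = k}

/-- the number of vertices `u ∈ ∂S` connected to `0` by a path of open edges of `S`. -/
noncomputable def phiCount {d : ℕ} (S : Finset (Edge d)) (ω : Config d) : ℕ :=
  Set.ncard {u | u ∈ edgeBoundary S ∧ ConnInS S ω (origin d) u}

/-- `φ_p(S) = 𝔼_p[#{u ∈ ∂S : 0 ↔ u inside S}]`. -/
noncomputable def phiS {d : ℕ} (μ : Measure (Config d)) (S : Finset (Edge d)) : ℝ :=
  ∫ ω, (phiCount S ω : ℝ) ∂μ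

section A
variable {d : ℕ}

lemma adj_symm {x y : Vertex d} (h : adj x y) : adj y x := by
  unfold adj at *
  simp only [show ∀ i, (y i - x i) = -(x i - y i) from fun i => by ring, Int.natAbs_neg]
  exact h

lemma adj_of_sym2 {a b : Vertex d} (e : Edge d) (hv : (e : Sym2 (Vertex d)) = s(a, b)) :
    adj a b := by
  obtain ⟨x, y, hxy, hx⟩ := e.2
  rw [hx, Sym2.eq_iff] at hv
  rcases hv with ⟨rfl, rfl⟩ | ⟨rfl, rfl⟩
  · exact hxy
  · exact adj_symm hxy

lemma step_of_edge {ω : Config d} {a b : Vertex d} (e : Edge d) (he : ω e = true)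
    (hv : (e : Sym2 (Vertex d)) = s(a, b)) : step ω a b := by
  refine ⟨adj_of_sym2 e hv, ?_⟩
  have : (⟨s(a,b), a, b, adj_of_sym2 e hv, rfl⟩ : Edge d) = e := Subtype.ext hv.symm
  rw [this]; exact he

lemma distLinf_comm (x y : Vertex d) : distLinf x y = distLinf y x := by
  unfold distLinf
  congr 1; funext i; rw [← Int.natAbs_neg, neg_sub]

lemma distLinf_self (x : Vertex d) : distLinf x x = 0 := by
  simp [distLinf]

lemma natAbs_le_distLinf (x y : Vertex d) (i : Fin d) : (x i - y i).natAbs ≤ distLinf x y :=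
  Finset.le_sup (f := fun i => (x i - y i).natAbs) (Finset.mem_univ i)

lemma distLinf_le (x y : Vertex d) (m : ℕ) (h : ∀ i, (x i - y i).natAbs ≤ m) :
    distLinf x y ≤ m := Finset.sup_le fun i _ => h i

lemma distLinf_triangle (x y z : Vertex d) :
    distLinf x z ≤ distLinf x y + distLinf y z := by
  refine distLinf_le _ _ _ fun i => ?_
  calc (x i - z i).natAbs = ((x i - y i) + (y i - z i)).natAbs := by ring_nf
    _ ≤ (x i - y i).natAbs + (y i - z i).natAbs := Int.natAbs_add_le _ _
    _ ≤ distLinf x y + distLinf y z :=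
        Nat.add_le_add (natAbs_le_distLinf _ _ _) (natAbs_le_distLinf _ _ _)

lemma distLinf_le_one_of_adj {x y : Vertex d} (h : adj x y) : distLinf x y ≤ 1 := by
  refine distLinf_le _ _ _ fun i => ?_
  calc (x i - y i).natAbs ≤ ∑ j, (x j - y j).natAbs :=
        Finset.single_le_sum (f := fun j => (x j - y j).natAbs) (fun j _ => Nat.zero_le _) (Finset.mem_univ i)
    _ = 1 := h

lemma mem_box_iff {n : ℕ} {x : Vertex d} : x ∈ box d n ↔ distLinf (origin d) x ≤ n := by
  unfold box distLinf origin
  have habs : ∀ i, |x i| = (((0:ℤ) - x i).natAbs : ℤ) := by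
    intro i
    rw [zero_sub, Int.natAbs_neg, Int.abs_eq_natAbs]
  constructor
  · intro h
    refine Finset.sup_le fun i _ => ?_
    have h1 := h i
    rw [habs i] at h1
    exact_mod_cast h1
  · intro h i
    have h1 := Finset.le_sup (f := fun i => ((0:ℤ) - x i).natAbs) (Finset.mem_univ i)
    have h2 : ((0:ℤ) - x i).natAbs ≤ n := le_trans h1 h
    rw [habs i]
    exact_mod_cast h2

lemma adj_distLinf_one {x y : Vertex d} (h : adj x y) : distLinf x y = 1 := by
  have h1 := distLinf_le_one_of_adj h
  -- some coordinate has natAbs ≥ 1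
  have : ∃ i, (x i - y i).natAbs = 1 := by
    by_contra hc
    push_neg at hc
    have : ∀ i ∈ Finset.univ, (x i - y i).natAbs = 0 := by
      intro i _
      have h2 : (x i - y i).natAbs ≤ 1 := by
        calc (x i - y i).natAbs ≤ ∑ j, (x j - y j).natAbs :=
          Finset.single_le_sum (f := fun j => (x j - y j).natAbs) (fun j _ => Nat.zero_le _) (Finset.mem_univ i)
          _ = 1 := h
      have := hc i; omega
    have hsum : (∑ i, (x i - y i).natAbs) = 0 := Finset.sum_eq_zero this
    rw [h] at hsum; omega
  obtain ⟨i, hi⟩ := this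
  have := natAbs_le_distLinf x y i
  omega

end A

section B
variable {d : ℕ}

/-- weight of a single edge state -/
noncomputable def W (p : ℝ) (b : Bool) : ℝ := if b then p else 1 - p

lemma W_nonneg {p : ℝ} (hp : p ∈ Set.Ioo (0:ℝ) 1) (b : Bool) : 0 ≤ W p b := by
  rcases b <;> simp [W] <;> [linarith [hp.2]; linarith [hp.1]]

/-- `A` is determined by the states of edges in `s`. -/
def DetBy (s : Finset (Edge d)) (A : Set (Config d)) : Prop :=
  ∀ ⦃ω ω' : Config d⦄, (∀ e ∈ s, ω e = ω' e) → ω ∈ A → ω' ∈ A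

lemma DetBy.mono {s t : Finset (Edge d)} {A : Set (Config d)} (h : DetBy s A) (hst : s ⊆ t) :
    DetBy t A := fun ω ω' hag => h (fun e he => hag e (hst he))

/-- canonical extension of a pattern on `s` -/
def patExt (s : Finset (Edge d)) (g : {e : Edge d // e ∈ s} → Bool) : Config d :=
  fun e => if h : e ∈ s then g ⟨e, h⟩ else false

/-- cylinder event given by a pattern on `s` -/
def cylOf (s : Finset (Edge d)) (g : {e : Edge d // e ∈ s} → Bool) : Set (Config d) :=
  {ω | ∀ e ∈ s, ω e = patExt s g e}

lemma patExt_mem {s : Finset (Edge d)} (g : {e : Edge d // e ∈ s} → Bool)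
    {e : Edge d} (he : e ∈ s) : patExt s g e = g ⟨e, he⟩ := dif_pos he

lemma mem_cylOf_restrict (s : Finset (Edge d)) (ω : Config d) :
    ω ∈ cylOf s (fun e => ω e.val) := by
  intro e he
  rw [patExt_mem _ he]

lemma measurable_cylOf (s : Finset (Edge d)) (g : {e : Edge d // e ∈ s} → Bool) :
    MeasurableSet (cylOf s g) := by
  have : cylOf s g = ⋂ e ∈ s, {ω : Config d | ω e = patExt s g e} := by
    ext ω; simp [cylOf, Set.mem_iInter]
  rw [this]
  refine Set.Finite.measurableSet_biInter s.finite_toSet fun e _ => ?_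
  have : {ω : Config d | ω e = patExt s g e} = (fun ω : Config d => ω e) ⁻¹' {patExt s g e} := rfl
  rw [this]
  exact (measurable_pi_apply e) (measurableSet_singleton (patExt s g e))

/-- the set of patterns on `s` compatible with `A` -/
noncomputable def patSet (s : Finset (Edge d)) (A : Set (Config d)) :
    Finset ({e : Edge d // e ∈ s} → Bool) :=
  @Finset.filter _ (fun g => patExt s g ∈ A) (Classical.decPred _) Finset.univ

lemma detBy_iff_pat {s : Finset (Edge d)} {A : Set (Config d)} (h : DetBy s A)
    (ω : Config d) : ω ∈ A ↔ patExt s (fun e => ω e.val) ∈ A := by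
  have hag : ∀ e ∈ s, ω e = patExt s (fun e : {e : Edge d // e ∈ s} => ω e.val) e := by
    intro e he; rw [patExt_mem _ he]
  exact ⟨fun hA => h hag hA, fun hA => h (fun e he => (hag e he).symm) hA⟩

lemma detBy_decomp {s : Finset (Edge d)} {A : Set (Config d)} (h : DetBy s A) :
    A = ⋃ g ∈ patSet s A, cylOf s g := by
  ext ω
  constructor
  · intro hω
    refine Set.mem_biUnion (show (fun e : {e : Edge d // e ∈ s} => ω e.val) ∈ patSet s A
      from ?_) (mem_cylOf_restrict s ω)
    simp only [patSet, Finset.mem_filter, Finset.mem_univ, true_and]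
    exact (detBy_iff_pat h ω).1 hω
  · intro hω
    obtain ⟨g, hg, hcyl⟩ := Set.mem_iUnion₂.1 hω
    simp only [patSet, Finset.mem_filter, Finset.mem_univ, true_and] at hg
    exact h (fun e he => (hcyl e he).symm) hg

lemma cylOf_disjoint {s : Finset (Edge d)} {g g' : {e : Edge d // e ∈ s} → Bool}
    (h : g ≠ g') : Disjoint (cylOf s g) (cylOf s g') := by
  rw [Set.disjoint_left]
  intro ω hg hg' 
  apply h
  funext e
  have h1 := hg e.val e.2
  have h2 := hg' e.val e.2
  rw [patExt_mem _ e.2] at h1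
  rw [patExt_mem _ e.2] at h2
  rw [← h1, ← h2]

lemma DetBy.measurableSet {s : Finset (Edge d)} {A : Set (Config d)} (h : DetBy s A) :
    MeasurableSet A := by
  rw [detBy_decomp h]
  exact (patSet s A).measurableSet_biUnion (fun g _ => measurable_cylOf s g)

lemma measure_cylOf {p : ℝ} {μ : Measure (Config d)} (hμ : IsBernoulli d p μ)
    (s : Finset (Edge d)) (g : {e : Edge d // e ∈ s} → Bool) :
    μ (cylOf s g) = ENNReal.ofReal (∏ e : {e : Edge d // e ∈ s}, W p (g e)) := by
  have := hμ.2 s (patExt s g)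
  rw [show cylOf s g = {ω : Config d | ∀ e ∈ s, ω e = patExt s g e} from rfl, this]
  congr 1
  rw [← Finset.prod_attach s (fun e => if patExt s g e then p else 1 - p),
    ← Finset.univ_eq_attach]
  refine Finset.prod_congr rfl fun e _ => ?_
  rw [patExt_mem _ e.2]
  rfl

/-- key formula: the measure of a finitely-determined event -/
lemma measure_detBy {p : ℝ} {μ : Measure (Config d)} (hμ : IsBernoulli d p μ)
    {s : Finset (Edge d)} {A : Set (Config d)} (h : DetBy s A) :
    μ A = ∑ g ∈ patSet s A, ENNReal.ofReal (∏ e : {e : Edge d // e ∈ s}, W p (g e)) := by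
  have hA : μ A = ∑ g ∈ patSet s A, μ (cylOf s g) := by
    conv_lhs => rw [detBy_decomp h]
    exact measure_biUnion_finset (fun g _ g' _ hne => cylOf_disjoint hne)
      (fun g _ => measurable_cylOf s g)
  rw [hA]
  exact Finset.sum_congr rfl fun g _ => measure_cylOf hμ s g


/-! ### Independence -/

lemma prod_pat {p : ℝ} (s : Finset (Edge d)) (g : {e : Edge d // e ∈ s} → Bool) :
    (∏ e : {e : Edge d // e ∈ s}, W p (g e)) = ∏ e ∈ s, W p (patExt s g e) := by
  rw [← Finset.prod_attach s (fun e => W p (patExt s g e)), ← Finset.univ_eq_attach]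
  refine Finset.prod_congr rfl fun e _ => ?_
  rw [patExt_mem _ e.2]

def restrL {s t : Finset (Edge d)} (g : {e : Edge d // e ∈ s ∪ t} → Bool) :
    {e : Edge d // e ∈ s} → Bool :=
  fun e => g ⟨e.val, Finset.mem_union_left t e.2⟩

def restrR {s t : Finset (Edge d)} (g : {e : Edge d // e ∈ s ∪ t} → Bool) :
    {e : Edge d // e ∈ t} → Bool :=
  fun e => g ⟨e.val, Finset.mem_union_right s e.2⟩

noncomputable def combine {s t : Finset (Edge d)} (g : {e : Edge d // e ∈ s} → Bool)
    (h : {e : Edge d // e ∈ t} → Bool) : {e : Edge d // e ∈ s ∪ t} → Bool :=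
  fun e => if he : e.val ∈ s then g ⟨e.val, he⟩
    else h ⟨e.val, (Finset.mem_union.1 e.2).resolve_left he⟩

lemma patExt_union_left {s t : Finset (Edge d)} (g : {e : Edge d // e ∈ s ∪ t} → Bool)
    {e : Edge d} (he : e ∈ s) : patExt (s ∪ t) g e = patExt s (restrL g) e := by
  rw [patExt_mem _ he, patExt_mem _ (Finset.mem_union_left t he)]
  rfl

lemma patExt_union_right {s t : Finset (Edge d)} (g : {e : Edge d // e ∈ s ∪ t} → Bool)
    {e : Edge d} (he : e ∈ t) : patExt (s ∪ t) g e = patExt t (restrR g) e := by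
  rw [patExt_mem _ he, patExt_mem _ (Finset.mem_union_right s he)]
  rfl

lemma measure_indep {p : ℝ} {μ : Measure (Config d)} (hp : p ∈ Set.Ioo (0:ℝ) 1)
    (hμ : IsBernoulli d p μ) {s t : Finset (Edge d)} {A B : Set (Config d)}
    (hA : DetBy s A) (hB : DetBy t B) (hst : Disjoint s t) :
    μ (A ∩ B) = μ A * μ B := by
  have hAB : DetBy (s ∪ t) (A ∩ B) := fun ω ω' hag hω =>
    ⟨hA (fun e he => hag e (Finset.mem_union_left t he)) hω.1,
     hB (fun e he => hag e (Finset.mem_union_right s he)) hω.2⟩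
  rw [measure_detBy hμ hAB, measure_detBy hμ hA, measure_detBy hμ hB,
    Finset.sum_mul_sum]
  rw [← Finset.sum_product']
  refine Finset.sum_nbij' (fun g => (restrL g, restrR g))
    (fun gh => combine gh.1 gh.2) ?_ ?_ ?_ ?_ ?_
  · -- memberships forward
    intro g hg
    simp only [patSet, Finset.mem_filter, Finset.mem_univ, true_and, Finset.mem_product] at hg ⊢
    exact ⟨hA (fun e he => (patExt_union_left g he)) hg.1,
      hB (fun e he => (patExt_union_right g he)) hg.2⟩
  · -- memberships backward
    intro gh hgh
    simp only [patSet, Finset.mem_filter, Finset.mem_univ, true_and, Finset.mem_product] at hgh ⊢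
    have hl : ∀ e ∈ s, patExt s gh.1 e = patExt (s ∪ t) (combine gh.1 gh.2) e := by
      intro e he
      rw [patExt_mem _ he, patExt_mem _ (Finset.mem_union_left t he)]
      simp only [combine]
      rw [dif_pos he]
    have hr : ∀ e ∈ t, patExt t gh.2 e = patExt (s ∪ t) (combine gh.1 gh.2) e := by
      intro e he
      rw [patExt_mem _ he, patExt_mem _ (Finset.mem_union_right s he)]
      have hes : e ∉ s := fun hes => (Finset.disjoint_left.1 hst hes) he
      simp only [combine]
      rw [dif_neg hes]
    exact ⟨hA hl hgh.1, hB hr hgh.2⟩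
  · -- left inverse
    intro g _
    funext e
    by_cases he : e.val ∈ s
    · show (if he' : e.val ∈ s then _ else _) = _
      rw [dif_pos he]
      exact congrArg g (Subtype.ext rfl)
    · show (if he' : e.val ∈ s then _ else _) = _
      rw [dif_neg he]
      exact congrArg g (Subtype.ext rfl)
  · -- right inverse
    intro gh _
    refine Prod.ext (funext fun e => ?_) (funext fun e => ?_)
    · show combine gh.1 gh.2 ⟨e.val, Finset.mem_union_left t e.2⟩ = gh.1 e
      simp only [combine]
      rw [dif_pos e.2]
    · show combine gh.1 gh.2 ⟨e.val, Finset.mem_union_right s e.2⟩ = gh.2 e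
      have hes : e.val ∉ s := fun hes => (Finset.disjoint_left.1 hst hes) e.2
      simp only [combine]
      rw [dif_neg hes]
  · -- values
    intro g hg
    have h1 : (∏ e : {e : Edge d // e ∈ s ∪ t}, W p (g e)) =
        (∏ e : {e : Edge d // e ∈ s}, W p (restrL g e)) *
        (∏ e : {e : Edge d // e ∈ t}, W p (restrR g e)) := by
      rw [prod_pat, prod_pat, prod_pat, Finset.prod_union hst]
      congr 1
      · exact Finset.prod_congr rfl fun e he => congrArg (W p) (patExt_union_left g he)
      · exact Finset.prod_congr rfl fun e he => congrArg (W p) (patExt_union_right g he)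
    rw [h1, ENNReal.ofReal_mul]
    exact Finset.prod_nonneg fun e _ => W_nonneg hp _


/-! ### Shift invariance -/

lemma adj_shift (v : Vertex d) {x y : Vertex d} : adj (x + v) (y + v) ↔ adj x y := by
  unfold adj
  have h : ∀ i, ((x + v) i - (y + v) i).natAbs = (x i - y i).natAbs := by
    intro i
    congr 1
    simp only [Pi.add_apply]
    ring
  rw [Finset.sum_congr rfl fun i _ => h i]

lemma subtype_app_congr {α : Type*} {P : α → Prop} (g : {x // P x} → Bool) {a b : α}
    {ha : P a} {hb : P b} (h : a = b) : g ⟨a, ha⟩ = g ⟨b, hb⟩ := by subst h; rfl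

def shiftE (v : Vertex d) (e : Edge d) : Edge d :=
  ⟨Sym2.map (fun x => x + v) e.val, by
    obtain ⟨x, y, hxy, hx⟩ := e.2
    exact ⟨x + v, y + v, (adj_shift v).2 hxy, by rw [hx, Sym2.map_pair_eq]⟩⟩

lemma sym2_shift_cancel (v : Vertex d) (z : Sym2 (Vertex d)) :
    Sym2.map (fun x => x + (-v)) (Sym2.map (fun x => x + v) z) = z := by
  induction z using Sym2.ind with
  | _ x y => simp [Sym2.map_pair_eq]

lemma shiftE_cancel (v : Vertex d) (e : Edge d) : shiftE (-v) (shiftE v e) = e :=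
  Subtype.ext (sym2_shift_cancel v e.val)

lemma shiftE_cancel' (v : Vertex d) (e : Edge d) : shiftE v (shiftE (-v) e) = e := by
  have := shiftE_cancel (-v) e
  rwa [neg_neg] at this

def shiftC (v : Vertex d) (ω : Config d) : Config d := fun e => ω (shiftE v e)

lemma shiftE_pair (v : Vertex d) {x y : Vertex d} (h : adj x y) :
    shiftE v ⟨s(x, y), x, y, h, rfl⟩ =
      ⟨s(x + v, y + v), x + v, y + v, (adj_shift v).2 h, rfl⟩ :=
  Subtype.ext (Sym2.map_pair_eq _ _ _)

lemma step_shift (v : Vertex d) (ω : Config d) (x y : Vertex d) :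
    step (shiftC v ω) x y ↔ step ω (x + v) (y + v) := by
  constructor
  · rintro ⟨h, hω⟩
    refine ⟨(adj_shift v).2 h, ?_⟩
    rw [show (⟨s(x + v, y + v), x + v, y + v, (adj_shift v).2 h, rfl⟩ : Edge d) =
      shiftE v ⟨s(x, y), x, y, h, rfl⟩ from (shiftE_pair v h).symm]
    exact hω
  · rintro ⟨h, hω⟩
    have h' : adj x y := (adj_shift v).1 h
    refine ⟨h', ?_⟩
    show ω (shiftE v ⟨s(x, y), x, y, h', rfl⟩) = true
    rw [shiftE_pair v h']
    exact hω

lemma shiftE_injective (v : Vertex d) : Function.Injective (shiftE v) := by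
  intro e e' h
  have := congrArg (shiftE (-v)) h
  rwa [shiftE_cancel, shiftE_cancel] at this

lemma measure_shift {p : ℝ} {μ : Measure (Config d)} (hμ : IsBernoulli d p μ)
    (v : Vertex d) {s : Finset (Edge d)} {A : Set (Config d)} (hA : DetBy s A) :
    μ ((shiftC v) ⁻¹' A) = μ A := by
  set s' : Finset (Edge d) := s.image (shiftE v) with hs'
  have hmem : ∀ e ∈ s, shiftE v e ∈ s' := fun e he => Finset.mem_image_of_mem _ he
  have hmem' : ∀ e' ∈ s', shiftE (-v) e' ∈ s := by
    intro e' he'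
    obtain ⟨a, ha, rfl⟩ := Finset.mem_image.1 he'
    rwa [shiftE_cancel]
  have hB : DetBy s' ((shiftC v) ⁻¹' A) := by
    intro ω ω' hag hω
    refine hA (fun e he => ?_) hω
    exact hag (shiftE v e) (hmem e he)
  rw [measure_detBy hμ hB, measure_detBy hμ hA]
  set i : ({e : Edge d // e ∈ s'} → Bool) → ({e : Edge d // e ∈ s} → Bool) :=
    fun g' e => g' ⟨shiftE v e.val, hmem e.val e.2⟩ with hi
  set j : ({e : Edge d // e ∈ s} → Bool) → ({e : Edge d // e ∈ s'} → Bool) :=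
    fun g e' => g ⟨shiftE (-v) e'.val, hmem' e'.val e'.2⟩ with hj
  have key : ∀ g', (∀ e ∈ s, shiftC v (patExt s' g') e = patExt s (i g') e) := by
    intro g' e he
    show patExt s' g' (shiftE v e) = _
    rw [patExt_mem _ (hmem e he), patExt_mem _ he]
  refine Finset.sum_nbij' i j ?_ ?_ ?_ ?_ ?_
  · intro g' hg'
    simp only [patSet, Finset.mem_filter, Finset.mem_univ, true_and] at hg' ⊢
    exact hA (key g') hg'
  · intro g hg
    simp only [patSet, Finset.mem_filter, Finset.mem_univ, true_and] at hg ⊢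
    show shiftC v (patExt s' (j g)) ∈ A
    refine hA (fun e he => ?_) hg
    rw [patExt_mem _ he]
    have := key (j g) e he
    rw [patExt_mem _ he] at this
    rw [this]
    show g _ = g _
    exact subtype_app_congr g (shiftE_cancel v e).symm
  · intro g' _
    funext e'
    show g' ⟨shiftE v (shiftE (-v) e'.val), _⟩ = g' e'
    exact subtype_app_congr g' (shiftE_cancel' v e'.val)
  · intro g _
    funext e
    show g ⟨shiftE (-v) (shiftE v e.val), _⟩ = g e
    exact subtype_app_congr g (shiftE_cancel v e.val)
  · intro g' hg'
    congr 1
    rw [prod_pat, prod_pat]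
    refine Finset.prod_nbij' (shiftE (-v)) (shiftE v) hmem'
      (fun e he => hmem e he) (fun e' he' => shiftE_cancel' v e')
      (fun e he => shiftE_cancel v e) ?_
    intro e' he'
    rw [patExt_mem _ he', patExt_mem _ (hmem' e' he')]
    show W p (g' ⟨e', he'⟩) = W p (g' ⟨shiftE v (shiftE (-v) e'), _⟩)
    rw [subtype_app_congr g' (shiftE_cancel' v e')]

end B

section C
variable {d : ℕ}

lemma touches_finite (S : Finset (Edge d)) : {x : Vertex d | touches S x}.Finite := by
  have h : {x : Vertex d | touches S x} = ⋃ e ∈ S, {x | x ∈ (e : Sym2 (Vertex d))} := by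
    ext x; simp [touches]
  rw [h]
  refine Set.Finite.biUnion S.finite_toSet fun e _ => ?_
  obtain ⟨a, b, hab, he⟩ := e.2
  have : {x : Vertex d | x ∈ (e : Sym2 (Vertex d))} = {a, b} := by
    ext x; rw [he]; simp [Sym2.mem_iff]
  rw [this]
  exact (Set.finite_singleton b).insert a

noncomputable def VSet (S : Finset (Edge d)) : Finset (Vertex d) :=
  (touches_finite S).toFinset

lemma mem_VSet {S : Finset (Edge d)} {x : Vertex d} : x ∈ VSet S ↔ touches S x :=
  Set.Finite.mem_toFinset _

lemma diam_bddAbove (S : Finset (Edge d)) :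
    BddAbove {k : ℕ | ∃ x y : Vertex d, touches S x ∧ touches S y ∧ distLinf x y = k} := by
  have hsub : {k : ℕ | ∃ x y : Vertex d, touches S x ∧ touches S y ∧ distLinf x y = k} ⊆
      (fun pr : Vertex d × Vertex d => distLinf pr.1 pr.2) ''
        ({x | touches S x} ×ˢ {x | touches S x}) := by
    rintro k ⟨x, y, hx, hy, rfl⟩
    exact ⟨(x, y), ⟨hx, hy⟩, rfl⟩
  exact (((touches_finite S).prod (touches_finite S)).image _).subset hsub |>.bddAbove

lemma distLinf_le_diam {S : Finset (Edge d)} {x y : Vertex d} (hx : touches S x)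
    (hy : touches S y) : distLinf x y ≤ diamS S :=
  le_csSup (diam_bddAbove S) ⟨x, y, hx, hy, rfl⟩

lemma one_le_diam {S : Finset (Edge d)} (hS : S.Nonempty) : 1 ≤ diamS S := by
  obtain ⟨e, he⟩ := hS
  obtain ⟨a, b, hab, hev⟩ := e.2
  have ha : touches S a := ⟨e, he, by rw [hev]; exact Sym2.mem_mk_left a b⟩
  have hb : touches S b := ⟨e, he, by rw [hev]; exact Sym2.mem_mk_right a b⟩
  calc 1 = distLinf a b := (adj_distLinf_one hab).symm
    _ ≤ diamS S := distLinf_le_diam ha hb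

/-- vertices near `a` form a finite set -/
lemma near_finite (a : Vertex d) (m : ℕ) : {x : Vertex d | distLinf a x ≤ m}.Finite := by
  have hsub : {x : Vertex d | distLinf a x ≤ m} ⊆
      Set.pi Set.univ (fun i => Set.Icc (a i - m) (a i + m)) := by
    intro x hx i _
    have h1 : (a i - x i).natAbs ≤ m := le_trans (natAbs_le_distLinf a x i) hx
    simp only [Set.mem_Icc]
    omega
  exact (Set.Finite.pi (fun i => Set.finite_Icc _ _)).subset hsub

lemma sym2_near_finite (a : Vertex d) (m : ℕ) :
    {z : Sym2 (Vertex d) | ∀ x ∈ z, distLinf a x ≤ m}.Finite := by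
  have hsub : {z : Sym2 (Vertex d) | ∀ x ∈ z, distLinf a x ≤ m} ⊆
      (fun pr : Vertex d × Vertex d => Sym2.mk pr.1 pr.2) '' ({x | distLinf a x ≤ m} ×ˢ {x | distLinf a x ≤ m}) := by
    intro z hz
    obtain ⟨⟨x, y⟩, rfl⟩ := Quot.exists_rep z
    exact ⟨(x, y), ⟨hz x (Sym2.mem_mk_left x y), hz y (Sym2.mem_mk_right x y)⟩, rfl⟩
  exact (((near_finite a m).prod (near_finite a m)).image _).subset hsub

lemma edges_near_finite (a : Vertex d) (m : ℕ) :
    {e : Edge d | ∀ x ∈ (e : Sym2 (Vertex d)), distLinf a x ≤ m}.Finite := by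
  have : {e : Edge d | ∀ x ∈ (e : Sym2 (Vertex d)), distLinf a x ≤ m} =
      Subtype.val ⁻¹' {z : Sym2 (Vertex d) | ∀ x ∈ z, distLinf a x ≤ m} := rfl
  rw [this]
  exact Set.Finite.preimage (Set.injOn_of_injective Subtype.val_injective)
    (sym2_near_finite a m)

noncomputable def edgesNearF (a : Vertex d) (m : ℕ) : Finset (Edge d) :=
  (edges_near_finite a m).toFinset

lemma mem_edgesNearF {a : Vertex d} {m : ℕ} {e : Edge d} :
    e ∈ edgesNearF a m ↔ ∀ x ∈ (e : Sym2 (Vertex d)), distLinf a x ≤ m :=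
  Set.Finite.mem_toFinset _

/-- escape: from a vertex at distance exactly `m`, there is a neighbour at distance `> m` -/
lemma exists_adj_dist_gt (hd : 0 < d) (a w : Vertex d) {m : ℕ} (hw : distLinf a w = m) :
    ∃ z, adj w z ∧ m < distLinf a z := by
  -- pick a coordinate attaining the sup (or any coordinate)
  obtain ⟨i, hi⟩ : ∃ i : Fin d, (a i - w i).natAbs = m := by
    rw [← hw]
    obtain ⟨i, _, hi⟩ := Finset.exists_mem_eq_sup Finset.univ
      (Finset.univ_nonempty_iff.2 ⟨⟨0, hd⟩⟩) (fun i => (a i - w i).natAbs)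
    exact ⟨i, hi.symm⟩
  set δ : ℤ := if a i ≤ w i then 1 else -1 with hδ
  refine ⟨Function.update w i (w i + δ), ?_, ?_⟩
  · unfold adj
    rw [Finset.sum_eq_single_of_mem i (Finset.mem_univ i)]
    · rw [Function.update_self]
      have h0 : w i - (w i + δ) = -δ := by ring
      rw [h0]
      rcases le_or_gt (a i) (w i) with h | h
      · rw [hδ, if_pos h]; rfl
      · rw [hδ, if_neg (not_le.2 h)]; rfl
    · intro j _ hj
      rw [Function.update_of_ne hj]
      omega
  · have hgt : m < (a i - Function.update w i (w i + δ) i).natAbs := by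
      rw [Function.update_self]
      have h2 : (a i - w i).natAbs = m := hi
      rcases le_or_gt (a i) (w i) with h | h
      · rw [hδ, if_pos h]; omega
      · rw [hδ, if_neg (not_le.2 h)]; omega
    calc m < (a i - Function.update w i (w i + δ) i).natAbs := hgt
      _ ≤ distLinf a (Function.update w i (w i + δ)) := natAbs_le_distLinf _ _ i

/-- a vertex on the translated boundary sphere of radius `m` around `a` -/
def TransBdry (a : Vertex d) (m : ℕ) (y : Vertex d) : Prop :=
  distLinf a y ≤ m ∧ ∃ z, adj y z ∧ m < distLinf a z

/-- the crossing lemma -/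
lemma crossing {R : Vertex d → Vertex d → Prop} (hR : ∀ u w, R u w → adj u w)
    {a y : Vertex d} (hy : Relation.ReflTransGen R a y) {m : ℕ} (hdist : m ≤ distLinf a y)
    (hd : 0 < d) :
    ∃ w, TransBdry a m w ∧
      Relation.ReflTransGen (fun u w => R u w ∧ distLinf a w ≤ m) a w := by
  have aux : (Relation.ReflTransGen (fun u w => R u w ∧ distLinf a w ≤ m) a y ∧
      distLinf a y ≤ m) ∨
      (∃ w z, Relation.ReflTransGen (fun u w => R u w ∧ distLinf a w ≤ m) a w ∧
        distLinf a w ≤ m ∧ adj w z ∧ m < distLinf a z) := by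
    clear hdist
    induction hy with
    | refl =>
      left
      refine ⟨Relation.ReflTransGen.refl, ?_⟩
      rw [distLinf_self]; exact Nat.zero_le m
    | tail hab hbc ih =>
      rename_i b c
      rcases ih with ⟨hpath, hb⟩ | hr
      · by_cases hc : distLinf a c ≤ m
        · exact Or.inl ⟨hpath.tail ⟨hbc, hc⟩, hc⟩
        · exact Or.inr ⟨b, c, hpath, hb, hR _ _ hbc, lt_of_not_ge hc⟩
      · exact Or.inr hr
  rcases aux with ⟨hpath, hle⟩ | ⟨w, z, hpath, hwle, hadj, hgt⟩
  · refine ⟨y, ⟨hle, ?_⟩, hpath⟩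
    exact exists_adj_dist_gt hd a y (le_antisymm hle hdist)
  · exact ⟨w, ⟨hwle, z, hadj, hgt⟩, hpath⟩

end C

lemma mem_classical_filter {α : Type*} (p : α → Prop) (s : Finset α) (a : α) :
    a ∈ @Finset.filter _ p (Classical.decPred _) s ↔ a ∈ s ∧ p a :=
  @Finset.mem_filter _ p (Classical.decPred _) s a

section D
variable {d : ℕ}

def stepAvoid (F : Finset (Edge d)) (ω : Config d) (x y : Vertex d) : Prop :=
  ∃ e : Edge d, e ∉ F ∧ ω e = true ∧ (e : Sym2 (Vertex d)) = s(x, y)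

lemma stepAvoid_adj {F : Finset (Edge d)} {ω : Config d} {x y : Vertex d}
    (h : stepAvoid F ω x y) : adj x y := by
  obtain ⟨e, _, _, he⟩ := h; exact adj_of_sym2 e he

lemma stepAvoid_step {F : Finset (Edge d)} {ω : Config d} {x y : Vertex d}
    (h : stepAvoid F ω x y) : step ω x y := by
  obtain ⟨e, _, hω, he⟩ := h; exact step_of_edge e hω he

def LocEvent (F : Finset (Edge d)) (a : Vertex d) (m : ℕ) : Set (Config d) :=
  {ω | ∃ y, TransBdry a m y ∧
    Relation.ReflTransGen (fun u w => stepAvoid F ω u w ∧ distLinf a w ≤ m) a y}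

lemma guarded_dist {F : Finset (Edge d)} {ω : Config d} {a y : Vertex d} {m : ℕ}
    (h : Relation.ReflTransGen (fun u w => stepAvoid F ω u w ∧ distLinf a w ≤ m) a y) :
    distLinf a y ≤ m := by
  induction h with
  | refl => rw [distLinf_self]; exact Nat.zero_le m
  | tail _ hbc _ => exact hbc.2

lemma locEvent_detBy (F : Finset (Edge d)) (a : Vertex d) (m : ℕ) :
    DetBy (edgesNearF a m \ F) (LocEvent F a m) := by
  intro ω ω' hag hω
  obtain ⟨y, hy, hpath⟩ := hω
  refine ⟨y, hy, ?_⟩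
  clear hy
  induction hpath with
  | refl => exact .refl
  | tail hab hbc ih =>
    obtain ⟨⟨e, heF, heω, hev⟩, hc⟩ := hbc
    refine ih.tail ⟨⟨e, heF, ?_, hev⟩, hc⟩
    rw [← hag e ?_]
    · exact heω
    · refine Finset.mem_sdiff.2 ⟨mem_edgesNearF.2 ?_, heF⟩
      intro x hx
      rw [hev] at hx
      rcases Sym2.mem_iff.1 hx with rfl | rfl
      · exact guarded_dist hab
      · exact hc

lemma locEvent_mono {F F' : Finset (Edge d)} (h : F' ⊆ F) (a : Vertex d) (m : ℕ) :
    LocEvent F a m ⊆ LocEvent F' a m := by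
  rintro ω ⟨y, hy, hpath⟩
  refine ⟨y, hy, Relation.ReflTransGen.mono ?_ _ _ hpath⟩
  rintro u w ⟨⟨e, heF, heω, hev⟩, hw⟩
  exact ⟨⟨e, fun hmem => heF (h hmem), heω, hev⟩, hw⟩

lemma locEvent_subset_ZtB (m : ℕ) : LocEvent (∅ : Finset (Edge d)) (origin d) m ⊆
    ZeroToBoundary d m := by
  rintro ω ⟨y, ⟨hle, z, hadj, hgt⟩, hpath⟩
  refine ⟨y, ⟨mem_box_iff.2 hle, z, hadj, fun hz => ?_⟩, ?_⟩
  · exact absurd (mem_box_iff.1 hz) (by omega)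
  · exact Relation.ReflTransGen.mono (fun u w hw => stepAvoid_step hw.1) _ _ hpath

lemma origin_add (u : Vertex d) : origin d + u = u := by
  funext i; simp [origin]

lemma distLinf_add (u x y : Vertex d) : distLinf (x + u) (y + u) = distLinf x y := by
  unfold distLinf
  congr 1; funext i
  have h : (x + u) i - (y + u) i = x i - y i := by
    show x i + u i - (y i + u i) = x i - y i
    ring
  rw [h]

lemma distLinf_origin_shift (u y : Vertex d) :
    distLinf (origin d) y = distLinf u (y + u) := by
  rw [← distLinf_add u (origin d) y, origin_add]

lemma stepAvoid_empty_shift (u : Vertex d) (ω : Config d) (x y : Vertex d) :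
    stepAvoid ∅ (shiftC u ω) x y ↔ stepAvoid ∅ ω (x + u) (y + u) := by
  constructor
  · rintro ⟨e, -, hω, hev⟩
    refine ⟨shiftE u e, Finset.notMem_empty _, hω, ?_⟩
    show Sym2.map _ (e : Sym2 (Vertex d)) = _
    rw [hev, Sym2.map_pair_eq]
  · rintro ⟨e, -, hω, hev⟩
    refine ⟨shiftE (-u) e, Finset.notMem_empty _, ?_, ?_⟩
    · show ω (shiftE u (shiftE (-u) e)) = true
      rw [shiftE_cancel' u e]; exact hω
    · show Sym2.map _ (e : Sym2 (Vertex d)) = _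
      rw [hev, Sym2.map_pair_eq, add_neg_cancel_right, add_neg_cancel_right]

lemma locEvent_shift (u : Vertex d) (m : ℕ) :
    LocEvent (∅ : Finset (Edge d)) u m = (shiftC u) ⁻¹' (LocEvent ∅ (origin d) m) := by
  ext ω
  constructor
  · rintro ⟨y, ⟨hle, z, hadj, hgt⟩, hpath⟩
    refine ⟨y + (-u), ⟨?_, z + (-u), ?_, ?_⟩, ?_⟩
    · rw [distLinf_origin_shift u, neg_add_cancel_right]; exact hle
    · exact (adj_shift (-u)).2 hadj
    · rw [distLinf_origin_shift u, neg_add_cancel_right]; exact hgt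
    · -- transfer path
      have key : ∀ v, Relation.ReflTransGen
          (fun a b => stepAvoid ∅ ω a b ∧ distLinf u b ≤ m) u v →
          Relation.ReflTransGen
          (fun a b => stepAvoid ∅ (shiftC u ω) a b ∧ distLinf (origin d) b ≤ m)
          (origin d) (v + (-u)) := by
        intro v hv
        induction hv with
        | refl =>
          have : u + (-u) = origin d := by funext i; simp [origin]
          rw [this]
        | tail hab hbc ih =>
          refine ih.tail ⟨?_, ?_⟩
          · rw [stepAvoid_empty_shift u, neg_add_cancel_right, neg_add_cancel_right]
            exact hbc.1
          · rw [distLinf_origin_shift u, neg_add_cancel_right]; exact hbc.2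
      exact key y hpath
  · rintro ⟨y, ⟨hle, z, hadj, hgt⟩, hpath⟩
    refine ⟨y + u, ⟨?_, z + u, (adj_shift u).2 hadj, ?_⟩, ?_⟩
    · rw [← distLinf_origin_shift u]; exact hle
    · rw [← distLinf_origin_shift u]; exact hgt
    · have key : ∀ v, Relation.ReflTransGen
          (fun a b => stepAvoid ∅ (shiftC u ω) a b ∧ distLinf (origin d) b ≤ m)
          (origin d) v →
          Relation.ReflTransGen
          (fun a b => stepAvoid ∅ ω a b ∧ distLinf u b ≤ m) u (v + u) := by
        intro v hv
        induction hv with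
        | refl => rw [origin_add]
        | tail hab hbc ih =>
          refine ih.tail ⟨?_, ?_⟩
          · rw [← stepAvoid_empty_shift u]; exact hbc.1
          · rw [← distLinf_origin_shift u]; exact hbc.2
      exact key y hpath

lemma measure_locEvent_shift {p : ℝ} {μ : Measure (Config d)} (hμ : IsBernoulli d p μ)
    (u : Vertex d) (m : ℕ) :
    μ (LocEvent (∅ : Finset (Edge d)) u m) = μ (LocEvent ∅ (origin d) m) := by
  rw [locEvent_shift]
  exact measure_shift hμ u (locEvent_detBy ∅ (origin d) m)

end D

section E
variable {d : ℕ}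

noncomputable def Cof (S : Finset (Edge d)) (ω : Config d) : Finset (Vertex d) :=
  @Finset.filter _ (fun x => ConnInS S ω (origin d) x) (Classical.decPred _) (VSet S)

noncomputable def ECset (S : Finset (Edge d)) (C : Finset (Vertex d)) : Finset (Edge d) :=
  @Finset.filter _ (fun e => ∃ x ∈ C, x ∈ (e : Sym2 (Vertex d))) (Classical.decPred _) S

def ACl (S : Finset (Edge d)) (C : Finset (Vertex d)) : Set (Config d) := {ω | Cof S ω = C}

noncomputable def bdF (S : Finset (Edge d)) : Finset (Vertex d) :=
  @Finset.filter _ (fun u => ∃ e : Edge d, e ∉ S ∧ u ∈ (e : Sym2 (Vertex d)))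
    (Classical.decPred _) (VSet S)

variable {S : Finset (Edge d)}

lemma conn_touches (hS0 : touches S (origin d)) {ω : Config d} {x : Vertex d}
    (h : ConnInS S ω (origin d) x) : touches S x := by
  induction h with
  | refl => exact hS0
  | tail hab hbc _ =>
    obtain ⟨e, heS, _, hev⟩ := hbc
    exact ⟨e, heS, by rw [hev]; exact Sym2.mem_mk_right _ _⟩

lemma mem_Cof (hS0 : touches S (origin d)) {ω : Config d} {x : Vertex d} :
    x ∈ Cof S ω ↔ ConnInS S ω (origin d) x := by
  unfold Cof
  rw [mem_classical_filter]
  exact ⟨fun h => h.2, fun h => ⟨mem_VSet.2 (conn_touches hS0 h), h⟩⟩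

lemma Cof_subset (ω : Config d) : Cof S ω ⊆ VSet S :=
  @Finset.filter_subset _ _ (Classical.decPred _) _

lemma ACl_detBy (hS0 : touches S (origin d)) (C : Finset (Vertex d)) :
    DetBy (ECset S C) (ACl S C) := by
  intro ω ω' hag hω
  have hω : Cof S ω = C := hω
  have dir1 : ∀ x, ConnInS S ω (origin d) x → ConnInS S ω' (origin d) x := by
    intro x hx
    induction hx with
    | refl => exact .refl
    | tail hab hbc ih =>
      rename_i b c
      obtain ⟨e, heS, heω, hev⟩ := hbc
      have hbC : b ∈ C := by rw [← hω]; exact (mem_Cof hS0).2 hab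
      have heEC : e ∈ ECset S C := (mem_classical_filter _ _ _).2
        ⟨heS, b, hbC, by rw [hev]; exact Sym2.mem_mk_left _ _⟩
      exact ih.tail ⟨e, heS, by rw [← hag e heEC]; exact heω, hev⟩
  have dir2 : ∀ x, ConnInS S ω' (origin d) x → x ∈ C := by
    intro x hx
    induction hx with
    | refl => rw [← hω]; exact (mem_Cof hS0).2 .refl
    | tail hab hbc ih =>
      rename_i b c
      obtain ⟨e, heS, heω', hev⟩ := hbc
      have heEC : e ∈ ECset S C := (mem_classical_filter _ _ _).2
        ⟨heS, b, ih, by rw [hev]; exact Sym2.mem_mk_left _ _⟩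
      have heω : ω e = true := by rw [hag e heEC]; exact heω'
      have hbconn : ConnInS S ω (origin d) b := (mem_Cof hS0).1 (hω ▸ ih)
      have hcconn : ConnInS S ω (origin d) c := hbconn.tail ⟨e, heS, heω, hev⟩
      rw [← hω]; exact (mem_Cof hS0).2 hcconn
  show Cof S ω' = C
  ext x
  constructor
  · intro hx
    exact dir2 x ((mem_Cof hS0).1 hx)
  · intro hx
    have : ConnInS S ω (origin d) x := (mem_Cof hS0).1 (hω ▸ hx)
    exact (mem_Cof hS0).2 (dir1 x this)

lemma ACl_disjoint {C C' : Finset (Vertex d)} (h : C ≠ C') :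
    Disjoint (ACl S C) (ACl S C') := by
  rw [Set.disjoint_left]
  rintro ω (hC : Cof S ω = C) (hC' : Cof S ω = C')
  exact h (hC ▸ hC' ▸ rfl)

def EuEv (S : Finset (Edge d)) (u : Vertex d) : Set (Config d) :=
  {ω | ConnInS S ω (origin d) u}

lemma EuEv_detBy (u : Vertex d) : DetBy S (EuEv S u) := by
  intro ω ω' hag hω
  show ConnInS S ω' (origin d) u
  induction hω with
  | refl => exact .refl
  | tail hab hbc ih =>
    obtain ⟨e, heS, heω, hev⟩ := hbc
    exact ih.tail ⟨e, heS, by rw [← hag e heS]; exact heω, hev⟩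

lemma EuEv_eq_union (hS0 : touches S (origin d)) (u : Vertex d) :
    EuEv S u = ⋃ C ∈ @Finset.filter _ (fun C => u ∈ C) (Classical.decPred _)
      (VSet S).powerset, ACl S C := by
  ext ω
  constructor
  · intro hω
    have hmem : Cof S ω ∈ @Finset.filter _ (fun C => u ∈ C) (Classical.decPred _)
        (VSet S).powerset := (mem_classical_filter _ _ _).2
      ⟨Finset.mem_powerset.2 (Cof_subset ω), (mem_Cof hS0).2 hω⟩
    exact Set.mem_biUnion hmem rfl
  · intro hω
    obtain ⟨C, hC, hω⟩ := Set.mem_iUnion₂.1 hω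
    have hCof : Cof S ω = C := hω
    have huC : u ∈ C := ((mem_classical_filter _ _ _).1 hC).2
    exact (mem_Cof hS0).1 (hCof ▸ huC)

end E

section F
variable {d : ℕ} {S : Finset (Edge d)}

lemma mem_bdF {u : Vertex d} : u ∈ bdF S ↔
    touches S u ∧ ∃ e : Edge d, e ∉ S ∧ u ∈ (e : Sym2 (Vertex d)) := by
  unfold bdF
  rw [mem_classical_filter, mem_VSet]

/-- The fundamental decomposition of the event `{0 ↔ ∂Λ_n}`. -/
lemma decomp (hd : 0 < d) (hS0 : touches S (origin d)) {n : ℕ} (hkn : diamS S ≤ n) :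
    ZeroToBoundary d n ⊆
      ⋃ C ∈ (VSet S).powerset,
        ⋃ u ∈ @Finset.filter _ (fun u => u ∈ C) (Classical.decPred _) (bdF S),
          (ACl S C ∩ LocEvent (ECset S C) u (n - diamS S)) := by
  intro ω hω
  obtain ⟨y, hybd, hconn⟩ := hω
  set k := diamS S with hk
  set C := Cof S ω with hC
  have hCpow : C ∈ (VSet S).powerset := Finset.mem_powerset.2 (Cof_subset ω)
  have hACl : ω ∈ ACl S C := rfl
  -- step one: find a pivot u
  have claim : ∀ v, Conn ω (origin d) v → v ∈ C ∨ ∃ u, u ∈ C ∧ u ∈ bdF S ∧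
      Relation.ReflTransGen (stepAvoid (ECset S C) ω) u v := by
    intro v hv
    induction hv with
    | refl => exact Or.inl ((mem_Cof hS0).2 .refl)
    | tail hab hbc ih =>
      rename_i b c
      obtain ⟨hadj, hbω⟩ := hbc
      by_cases hcC : c ∈ C
      · exact Or.inl hcC
      · have hnotEC : (⟨s(b, c), b, c, hadj, rfl⟩ : Edge d) ∉ ECset S C := by
          intro hmem
          obtain ⟨heS, x, hxC, hxe⟩ := (mem_classical_filter _ _ _).1 hmem
          rcases Sym2.mem_iff.1 hxe with rfl | rfl
          · -- x = b ∈ C, edge open in S: c joins the cluster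
            have hbconn : ConnInS S ω (origin d) x := (mem_Cof hS0).1 hxC
            have : ConnInS S ω (origin d) c := hbconn.tail ⟨_, heS, hbω, rfl⟩
            exact hcC ((mem_Cof hS0).2 this)
          · exact hcC hxC
        have hstep : stepAvoid (ECset S C) ω b c := ⟨_, hnotEC, hbω, rfl⟩
        rcases ih with hbC | ⟨u, huC, hubd, hpath⟩
        · refine Or.inr ⟨b, hbC, ?_, Relation.ReflTransGen.single hstep⟩
          have hebcS : (⟨s(b, c), b, c, hadj, rfl⟩ : Edge d) ∉ S := by
            intro hS
            exact hnotEC ((mem_classical_filter _ _ _).2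
              ⟨hS, b, hbC, Sym2.mem_mk_left _ _⟩)
          exact mem_bdF.2 ⟨mem_VSet.1 (Cof_subset ω hbC), _, hebcS, Sym2.mem_mk_left _ _⟩
        · exact Or.inr ⟨u, huC, hubd, hpath.tail hstep⟩
  obtain ⟨hybox, z, hyz, hznot⟩ := hybd
  have hdisty : n ≤ distLinf (origin d) y := by
    have hz : ¬ distLinf (origin d) z ≤ n := fun h => hznot (mem_box_iff.2 h)
    have h3 := distLinf_triangle (origin d) y z
    have h4 := distLinf_le_one_of_adj hyz
    omega
  rcases claim y hconn with hyC | ⟨u, huC, hubd, hpath⟩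
  · -- y itself is in the cluster: then n = diam S and y is the pivot
    have hytS : touches S y := mem_VSet.1 (Cof_subset ω hyC)
    have hdyk : distLinf (origin d) y ≤ k := distLinf_le_diam hS0 hytS
    have heyzS : (⟨s(y, z), y, z, hyz, rfl⟩ : Edge d) ∉ S := by
      intro hS
      have htz : touches S z := ⟨_, hS, Sym2.mem_mk_right y z⟩
      exact hznot (mem_box_iff.2 (le_trans (distLinf_le_diam hS0 htz) hkn))
    have hybd' : y ∈ bdF S := mem_bdF.2 ⟨hytS, _, heyzS, Sym2.mem_mk_left _ _⟩
    have hge : n - k ≤ distLinf y y := by rw [distLinf_self]; omega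
    obtain ⟨w, hw, hwpath⟩ := crossing (fun _ _ h => stepAvoid_adj h)
      (Relation.ReflTransGen.refl (a := y)) hge hd
    refine Set.mem_biUnion hCpow (Set.mem_biUnion
      ((mem_classical_filter _ _ _).2 ⟨hybd', hyC⟩) ⟨hACl, w, hw, hwpath⟩)
  · have hutS : touches S u := mem_VSet.1 (Cof_subset ω huC)
    have hduk : distLinf (origin d) u ≤ k := distLinf_le_diam hS0 hutS
    have hge : n - k ≤ distLinf u y := by
      have h3 := distLinf_triangle (origin d) u y
      omega
    obtain ⟨w, hw, hwpath⟩ := crossing (fun _ _ h => stepAvoid_adj h) hpath hge hd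
    refine Set.mem_biUnion hCpow (Set.mem_biUnion
      ((mem_classical_filter _ _ _).2 ⟨hubd, huC⟩) ⟨hACl, w, hw, hwpath⟩)

end F

section G
variable {d : ℕ} {S : Finset (Edge d)} {p : ℝ} {μ : Measure (Config d)}

lemma phiCount_eq (ω : Config d) :
    phiCount S ω = (@Finset.filter _ (fun u => ConnInS S ω (origin d) u)
      (Classical.decPred _) (bdF S)).card := by
  unfold phiCount
  have hset : {u | u ∈ edgeBoundary S ∧ ConnInS S ω (origin d) u} =
      ↑(@Finset.filter _ (fun u => ConnInS S ω (origin d) u)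
        (Classical.decPred _) (bdF S)) := by
    ext u
    rw [Set.mem_setOf_eq, Finset.mem_coe, mem_classical_filter, mem_bdF]
    exact Iff.rfl
  rw [hset, Set.ncard_coe_finset]

lemma phiCount_cast (ω : Config d) : (phiCount S ω : ℝ) =
    ∑ u ∈ bdF S, Set.indicator (EuEv S u) (fun _ => (1 : ℝ)) ω := by
  rw [phiCount_eq, @Finset.card_filter _ _ (Classical.decPred _) (bdF S)]
  push_cast
  refine Finset.sum_congr rfl fun u _ => ?_
  by_cases h : ConnInS S ω (origin d) u
  · rw [if_pos h, Set.indicator_of_mem (show ω ∈ EuEv S u from h)]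
  · rw [if_neg h, Set.indicator_of_notMem (show ω ∉ EuEv S u from h)]

lemma phiS_nonneg : 0 ≤ phiS μ S :=
  integral_nonneg fun ω => Nat.cast_nonneg _

lemma ofReal_phiS (hμ : IsBernoulli d p μ) :
    ENNReal.ofReal (phiS μ S) = ∑ u ∈ bdF S, μ (EuEv S u) := by
  haveI := hμ.1
  have hmeas : ∀ u : Vertex d, MeasurableSet (EuEv S u) :=
    fun u => (EuEv_detBy u).measurableSet
  have hint : ∀ u ∈ bdF S,
      Integrable (Set.indicator (EuEv S u) (fun _ => (1 : ℝ))) μ :=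
    fun u _ => (integrable_const 1).indicator (hmeas u)
  have h1 : phiS μ S = ∑ u ∈ bdF S, (μ (EuEv S u)).toReal := by
    unfold phiS
    rw [show (fun ω => (phiCount S ω : ℝ)) =
      fun ω => ∑ u ∈ bdF S, Set.indicator (EuEv S u) (fun _ => (1 : ℝ)) ω
      from funext phiCount_cast]
    rw [integral_finset_sum _ hint]
    exact Finset.sum_congr rfl fun u _ => integral_indicator_one (hmeas u)
  rw [h1, ENNReal.ofReal_sum_of_nonneg (fun u _ => ENNReal.toReal_nonneg)]
  exact Finset.sum_congr rfl fun u _ => ENNReal.ofReal_toReal (measure_ne_top μ _)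

lemma sum_classical_filter {M α : Type*} [AddCommMonoid M] (p : α → Prop) (s : Finset α)
    (f : α → M) :
    ∑ a ∈ @Finset.filter _ p (Classical.decPred _) s, f a
      = ∑ a ∈ s, @ite _ (p a) (Classical.decPred p a) (f a) 0 :=
  by
  letI : DecidablePred p := Classical.decPred p
  exact Finset.sum_filter p f

lemma sum_ACl_eq (hS0 : touches S (origin d)) :
    ∑ C ∈ (VSet S).powerset,
      ∑ _u ∈ @Finset.filter _ (fun u => u ∈ C) (Classical.decPred _) (bdF S),
        μ (ACl S C) = ∑ u ∈ bdF S, μ (EuEv S u) := by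
  have h1 : ∀ u : Vertex d, μ (EuEv S u) =
      ∑ C ∈ @Finset.filter _ (fun C => u ∈ C) (Classical.decPred _)
        (VSet S).powerset, μ (ACl S C) := by
    intro u
    rw [EuEv_eq_union hS0 u]
    exact measure_biUnion_finset (fun C _ C' _ hne => ACl_disjoint hne)
      (fun C _ => (ACl_detBy hS0 C).measurableSet)
  rw [Finset.sum_congr rfl (fun u _ => h1 u)]
  have h2 : ∀ u : Vertex d,
      (∑ C ∈ @Finset.filter _ (fun C => u ∈ C) (Classical.decPred _)
        (VSet S).powerset, μ (ACl S C)) =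
      ∑ C ∈ (VSet S).powerset,
        @ite _ (u ∈ C) (Classical.decPred (fun C => u ∈ C) C) (μ (ACl S C)) 0 := fun u =>
    sum_classical_filter (fun C => u ∈ C) _ _
  have h3 : ∀ C ∈ (VSet S).powerset,
      (∑ _u ∈ @Finset.filter _ (fun u => u ∈ C) (Classical.decPred _) (bdF S),
        μ (ACl S C)) = ∑ u ∈ bdF S,
        @ite _ (u ∈ C) (Classical.decPred (fun u => u ∈ C) u) (μ (ACl S C)) 0 := fun C _ =>
    sum_classical_filter (fun u => u ∈ C) _ _
  rw [Finset.sum_congr rfl h3, Finset.sum_congr rfl (fun u _ => h2 u), Finset.sum_comm]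

lemma main_bound (hd : 2 ≤ d) (hp : p ∈ Set.Ioo (0 : ℝ) 1) (hμ : IsBernoulli d p μ)
    (hS : S.Nonempty) (hS0 : touches S (origin d)) (n : ℕ) :
    μ (ZeroToBoundary d n) ≤ ENNReal.ofReal (phiS μ S ^ (n / diamS S)) := by
  haveI := hμ.1
  induction n using Nat.strong_induction_on with
  | _ n ih =>
  have hk1 : 1 ≤ diamS S := one_le_diam hS
  by_cases hkn : diamS S ≤ n
  case neg =>
    rw [Nat.div_eq_of_lt (lt_of_not_ge hkn), pow_zero, ENNReal.ofReal_one]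
    exact prob_le_one
  case pos =>
    set k := diamS S with hk
    set m : ℕ := n - k with hm
    have hX : μ (ZeroToBoundary d m) ≤ ENNReal.ofReal (phiS μ S ^ (m / k)) :=
      ih m (by omega)
    have hLoc : ∀ (C : Finset (Vertex d)) (u : Vertex d),
        μ (LocEvent (ECset S C) u m) ≤ ENNReal.ofReal (phiS μ S ^ (m / k)) := by
      intro C u
      calc μ (LocEvent (ECset S C) u m)
          ≤ μ (LocEvent ∅ u m) :=
            measure_mono (locEvent_mono (Finset.empty_subset _) u m)
        _ = μ (LocEvent ∅ (origin d) m) := measure_locEvent_shift hμ u m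
        _ ≤ μ (ZeroToBoundary d m) := measure_mono (locEvent_subset_ZtB m)
        _ ≤ ENNReal.ofReal (phiS μ S ^ (m / k)) := hX
    calc μ (ZeroToBoundary d n)
        ≤ μ (⋃ C ∈ (VSet S).powerset,
            ⋃ u ∈ @Finset.filter _ (fun u => u ∈ C) (Classical.decPred _) (bdF S),
              (ACl S C ∩ LocEvent (ECset S C) u m)) :=
          measure_mono (decomp (by omega) hS0 hkn)
      _ ≤ ∑ C ∈ (VSet S).powerset,
            μ (⋃ u ∈ @Finset.filter _ (fun u => u ∈ C) (Classical.decPred _) (bdF S),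
              (ACl S C ∩ LocEvent (ECset S C) u m)) := measure_biUnion_finset_le _ _
      _ ≤ ∑ C ∈ (VSet S).powerset,
            ∑ u ∈ @Finset.filter _ (fun u => u ∈ C) (Classical.decPred _) (bdF S),
              μ (ACl S C ∩ LocEvent (ECset S C) u m) :=
          Finset.sum_le_sum fun C _ => measure_biUnion_finset_le _ _
      _ = ∑ C ∈ (VSet S).powerset,
            ∑ u ∈ @Finset.filter _ (fun u => u ∈ C) (Classical.decPred _) (bdF S),
              μ (ACl S C) * μ (LocEvent (ECset S C) u m) :=
          Finset.sum_congr rfl fun C _ => Finset.sum_congr rfl fun u _ =>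
            measure_indep hp hμ (ACl_detBy hS0 C) (locEvent_detBy (ECset S C) u m)
              disjoint_sdiff_self_right
      _ ≤ ∑ C ∈ (VSet S).powerset,
            ∑ u ∈ @Finset.filter _ (fun u => u ∈ C) (Classical.decPred _) (bdF S),
              μ (ACl S C) * ENNReal.ofReal (phiS μ S ^ (m / k)) :=
          Finset.sum_le_sum fun C _ => Finset.sum_le_sum fun u _ =>
            mul_le_mul_right (hLoc C u) _
      _ = (∑ C ∈ (VSet S).powerset,
            ∑ _u ∈ @Finset.filter _ (fun u => u ∈ C) (Classical.decPred _) (bdF S),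
              μ (ACl S C)) * ENNReal.ofReal (phiS μ S ^ (m / k)) := by
          rw [Finset.sum_mul]
          exact Finset.sum_congr rfl fun C _ => by rw [Finset.sum_mul]
      _ = ENNReal.ofReal (phiS μ S) * ENNReal.ofReal (phiS μ S ^ (m / k)) := by
          rw [sum_ACl_eq hS0, ofReal_phiS hμ]
      _ = ENNReal.ofReal (phiS μ S ^ (m / k + 1)) := by
          rw [← ENNReal.ofReal_mul phiS_nonneg, ← pow_succ']
      _ = ENNReal.ofReal (phiS μ S ^ (n / k)) := by
          rw [Nat.div_eq_sub_div (by omega) hkn]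

end G

/-- For every `d ≥ 2`, `p ∈ (0,1)`, `n ≥ 1` and every nonempty finite connected set `S` of
edges of `ℤ^d` with at least one edge incident to `0`,
`ℙ_p[0 ↔ ∂Λ_n] ≤ φ_p(S)^{⌊n / diam(S)⌋}`. -/
theorem phiS_exponential_bound
    (d : ℕ) (hd : 2 ≤ d) (p : ℝ) (hp : p ∈ Set.Ioo (0 : ℝ) 1)
    (μ : Measure (Config d)) (hμ : IsBernoulli d p μ)
    (n : ℕ) (hn : 1 ≤ n)
    (S : Finset (Edge d)) (hS : S.Nonempty) (hSconn : SConnected S)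
    (hS0 : touches S (origin d)) :
    μ (ZeroToBoundary d n) ≤ ENNReal.ofReal (phiS μ S ^ (n / diamS S)) :=
  main_bound hd hp hμ hS hS0 n
end Perc
end

section
/- For every dimension d ≥ 2, every p ∈ (0,1) and every integer n ≥ 1, the map p ↦ ℙ_p[0 ↔ ∂Λ_n] is differentiable and its derivative satisfies d/dp ℙ_p[0 ↔ ∂Λ_n] ≥ (inf_S φ_p(S)) · (1 − ℙ_p[0 ↔ ∂Λ_n]), where the infimum is over all finite connected sets S of edges with at least one edge incident to 0, together with S = ∅. -/
open MeasureTheory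

namespace Perc

section Basic

variable {d : ℕ}

/-- The edge with endpoints `x`, `y`. -/
def mkE (x y : Vertex d) (h : adj x y) : Edge d := ⟨s(x, y), x, y, h, rfl⟩

lemma mkE_symm (x y : Vertex d) (h : adj x y) (h' : adj y x) :
    mkE x y h = mkE y x h' := Subtype.ext Sym2.eq_swap

lemma edge_other (e : Edge d) {u : Vertex d} (hu : u ∈ (e : Sym2 (Vertex d))) :
    ∃ (v : Vertex d) (h : adj u v), e = mkE u v h := by
  obtain ⟨x, y, hxy, hval⟩ := e.2
  rw [hval] at hu
  rcases Sym2.mem_iff.mp hu with rfl | rfl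
  · exact ⟨y, hxy, Subtype.ext hval⟩
  · exact ⟨x, adj_symm hxy, Subtype.ext (hval.trans Sym2.eq_swap)⟩

lemma mem_mkE_left (x y : Vertex d) (h : adj x y) : x ∈ (mkE x y h : Sym2 (Vertex d)) := by
  simp [mkE]

lemma mem_mkE_right (x y : Vertex d) (h : adj x y) : y ∈ (mkE x y h : Sym2 (Vertex d)) := by
  simp [mkE]

lemma origin_mem_box (n : ℕ) : origin d ∈ box d n := by
  intro i; simp [origin, box]

/-- The box as a `Finset`. -/
noncomputable def boxFinset (d n : ℕ) : Finset (Vertex d) :=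
  Fintype.piFinset fun _ => Finset.Icc (-(n : ℤ)) n

lemma mem_boxFinset {n : ℕ} {x : Vertex d} : x ∈ boxFinset d n ↔ x ∈ box d n := by
  simp [boxFinset, Fintype.mem_piFinset, box, abs_le, Finset.mem_Icc, Set.mem_setOf_eq]

lemma finite_boxEdges (d n : ℕ) :
    {e : Edge d | ∀ v ∈ (e : Sym2 (Vertex d)), v ∈ box d n}.Finite := by
  have h1 : Set.Finite ((fun q : Vertex d × Vertex d => s(q.1, q.2)) ''
      (↑(boxFinset d n) ×ˢ ↑(boxFinset d n))) :=
    (((boxFinset d n).finite_toSet).prod ((boxFinset d n).finite_toSet)).image _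
  refine Set.Finite.subset (h1.preimage (f := (Subtype.val : Edge d → Sym2 (Vertex d))) (Set.injOn_of_injective Subtype.val_injective)) ?_
  rintro e he
  obtain ⟨x, y, hxy, hval⟩ := e.2
  have hx : x ∈ (e : Sym2 (Vertex d)) := by rw [hval]; exact Sym2.mem_mk_left x y
  have hy : y ∈ (e : Sym2 (Vertex d)) := by rw [hval]; exact Sym2.mem_mk_right x y
  exact ⟨(x, y), ⟨mem_boxFinset.mpr (he x hx), mem_boxFinset.mpr (he y hy)⟩, hval.symm⟩

/-- The finite set of edges with both endpoints in the box. -/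
noncomputable def FE (d n : ℕ) : Finset (Edge d) := (finite_boxEdges d n).toFinset

lemma mem_FE {n : ℕ} {e : Edge d} :
    e ∈ FE d n ↔ ∀ v ∈ (e : Sym2 (Vertex d)), v ∈ box d n :=
  Set.Finite.mem_toFinset _

lemma mkE_mem_FE {n : ℕ} {x y : Vertex d} (h : adj x y)
    (hx : x ∈ box d n) (hy : y ∈ box d n) : mkE x y h ∈ FE d n := by
  rw [mem_FE]
  intro v hv
  rcases Sym2.mem_iff.mp hv with rfl | rfl
  · exact hx
  · exact hy

end Basic

section ConnB

variable {d : ℕ}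

/-- One open step staying inside the box. -/
def stepB (n : ℕ) (ω : Config d) (a b : Vertex d) : Prop :=
  ∃ h : adj a b, a ∈ box d n ∧ b ∈ box d n ∧ ω (mkE a b h) = true

/-- Connection inside the box. -/
def ConnB (n : ℕ) (ω : Config d) : Vertex d → Vertex d → Prop :=
  Relation.ReflTransGen (stepB n ω)

/-- `v` is connected to `∂Λ_n` inside the box. -/
def CB (n : ℕ) (ω : Config d) (v : Vertex d) : Prop :=
  ∃ z ∈ boxBoundary d n, ConnB n ω v z

lemma stepB_symm {n : ℕ} {ω : Config d} {a b : Vertex d} (h : stepB n ω a b) :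
    stepB n ω b a := by
  obtain ⟨hadj, ha, hb, hopen⟩ := h
  exact ⟨adj_symm hadj, hb, ha, by rw [← mkE_symm a b hadj (adj_symm hadj)]; exact hopen⟩

lemma stepB_step {n : ℕ} {ω : Config d} {a b : Vertex d} (h : stepB n ω a b) : step ω a b := by
  obtain ⟨hadj, _, _, hopen⟩ := h
  exact ⟨hadj, hopen⟩

lemma zeroToBoundary_iff {n : ℕ} (ω : Config d) :
    ω ∈ ZeroToBoundary d n ↔ CB n ω (origin d) := by
  constructor
  · rintro ⟨y, hy, hconn⟩
    have key : ∀ b, Conn ω (origin d) b →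
        CB n ω (origin d) ∨ (b ∈ box d n ∧ ConnB n ω (origin d) b) := by
      intro b hb
      induction hb with
      | refl => exact Or.inr ⟨origin_mem_box n, Relation.ReflTransGen.refl⟩
      | @tail a b hab hstep ih =>
        rcases ih with h | ⟨habox, hc⟩
        · exact Or.inl h
        · obtain ⟨hadj, hopen⟩ := hstep
          by_cases hb : b ∈ box d n
          · exact Or.inr ⟨hb, hc.tail ⟨hadj, habox, hb, hopen⟩⟩
          · exact Or.inl ⟨a, ⟨habox, b, hadj, hb⟩, hc⟩
    rcases key y hconn with h | ⟨_, h⟩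
    · exact h
    · exact ⟨y, hy, h⟩
  · rintro ⟨z, hz, hconn⟩
    exact ⟨z, hz, Relation.ReflTransGen.mono (r := stepB n ω) (p := step ω) (fun a b h => stepB_step h) _ _ hconn⟩

lemma ConnB_mono {n : ℕ} {ω ω' : Config d} (h : ∀ e, ω e = true → ω' e = true)
    {u v : Vertex d} (hc : ConnB n ω u v) : ConnB n ω' u v :=
  Relation.ReflTransGen.mono (r := stepB n ω) (p := stepB n ω')
    (fun a b hab => by obtain ⟨hadj, ha, hb, ho⟩ := hab; exact ⟨hadj, ha, hb, h _ ho⟩) _ _ hc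

lemma CB_mono {n : ℕ} {ω ω' : Config d} (h : ∀ e, ω e = true → ω' e = true)
    {v : Vertex d} (hc : CB n ω v) : CB n ω' v := by
  obtain ⟨z, hz, hconn⟩ := hc
  exact ⟨z, hz, ConnB_mono h hconn⟩

lemma stepB_congr {n : ℕ} {ω ω' : Config d} (h : ∀ e ∈ FE d n, ω e = ω' e)
    {a b : Vertex d} (hab : stepB n ω a b) : stepB n ω' a b := by
  obtain ⟨hadj, ha, hb, hopen⟩ := hab
  exact ⟨hadj, ha, hb, by rw [← h _ (mkE_mem_FE hadj ha hb)]; exact hopen⟩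

lemma ConnB_congr {n : ℕ} {ω ω' : Config d} (h : ∀ e ∈ FE d n, ω e = ω' e)
    {u v : Vertex d} (hc : ConnB n ω u v) : ConnB n ω' u v :=
  Relation.ReflTransGen.mono (r := stepB n ω) (p := stepB n ω') (fun a b hab => stepB_congr h hab) _ _ hc

lemma CB_congr {n : ℕ} {ω ω' : Config d} (h : ∀ e ∈ FE d n, ω e = ω' e)
    {v : Vertex d} (hc : CB n ω v) : CB n ω' v := by
  obtain ⟨z, hz, hconn⟩ := hc
  exact ⟨z, hz, ConnB_congr h hconn⟩

lemma zeroToBoundary_congr {n : ℕ} {ω ω' : Config d} (h : ∀ e ∈ FE d n, ω e = ω' e) :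
    ω ∈ ZeroToBoundary d n ↔ ω' ∈ ZeroToBoundary d n := by
  rw [zeroToBoundary_iff, zeroToBoundary_iff]
  exact ⟨CB_congr h, CB_congr fun e he => (h e he).symm⟩

end ConnB
section Bridge

open scoped Classical

variable {d : ℕ}

/-- extend a finite edge set to a configuration -/
def extC (K : Finset (Edge d)) : Config d := fun e => decide (e ∈ K)

/-- cylinder: configurations agreeing with `K` on `s`. -/
def cyl (s K : Finset (Edge d)) : Set (Config d) := {ω | ∀ e ∈ s, ω e = decide (e ∈ K)}

lemma measurableSet_cyl (s K : Finset (Edge d)) : MeasurableSet (cyl s K) := by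
  have : cyl s K = ⋂ e ∈ s, (fun ω : Config d => ω e) ⁻¹' {decide (e ∈ K)} := by
    ext ω; simp [cyl, Set.mem_iInter]
  rw [this]
  exact MeasurableSet.biInter s.countable_toSet
    (fun e _ => measurable_pi_apply e (measurableSet_singleton _))

/-- weight of a configuration `K ⊆ s`. -/
noncomputable def Wt (q : ℝ) (m k : ℕ) : ℝ := q ^ k * (1 - q) ^ (m - k)

lemma measure_cyl {q : ℝ} {ν : Measure (Config d)} (hb : IsBernoulli d q ν)
    {s K : Finset (Edge d)} (hK : K ⊆ s) :
    ν (cyl s K) = ENNReal.ofReal (Wt q s.card K.card) := by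
  have h := hb.2 s (extC K)
  have hset : {ω : Config d | ∀ e ∈ s, ω e = extC K e} = cyl s K := rfl
  rw [hset] at h
  rw [h]
  congr 1
  have : ∀ e ∈ s, (if extC K e then q else 1 - q) = (if e ∈ K then q else 1 - q) := by
    intro e _
    simp [extC]
  rw [Finset.prod_congr rfl this, ← Finset.prod_sdiff hK]
  rw [Finset.prod_congr rfl (fun e (he : e ∈ s \ K) => if_neg (Finset.mem_sdiff.mp he).2),
    Finset.prod_congr rfl (fun e (he : e ∈ K) => if_pos he),
    Finset.prod_const, Finset.prod_const, Finset.card_sdiff_of_subset hK, Wt, mul_comm]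

lemma mem_cyl_self (s : Finset (Edge d)) (ω : Config d) :
    ω ∈ cyl s (s.filter (fun e => ω e = true)) := by
  intro e he
  rcases Bool.eq_false_or_eq_true (ω e) with h | h <;> simp [h, he]

lemma extC_agrees (s K : Finset (Edge d)) (ω : Config d) (hω : ω ∈ cyl s K) :
    ∀ e ∈ s, extC K e = ω e := by
  intro e he
  rw [hω e he]; rfl

lemma cyl_eq_of_mem {s K : Finset (Edge d)} (hK : K ⊆ s) {ω : Config d}
    (hω : ω ∈ cyl s K) : K = s.filter (fun e => ω e = true) := by
  ext e
  simp only [Finset.mem_filter]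
  constructor
  · intro he
    refine ⟨hK he, ?_⟩
    rw [hω e (hK he)]; simp [he]
  · rintro ⟨hes, het⟩
    have := hω e hes
    rw [het] at this
    exact of_decide_eq_true this.symm

/-- The main measure bridge: the measure of an event determined by the edges in `s`. -/
lemma measure_eq_sum {q : ℝ} {ν : Measure (Config d)} (hb : IsBernoulli d q ν)
    (s : Finset (Edge d)) (B : Set (Config d))
    (hdep : ∀ ω ω' : Config d, (∀ e ∈ s, ω e = ω' e) → (ω ∈ B ↔ ω' ∈ B)) :
    ν B = ∑ K ∈ s.powerset.filter (fun K => extC K ∈ B),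
      ENNReal.ofReal (Wt q s.card K.card) := by
  have hBeq : B = ⋃ K ∈ s.powerset.filter (fun K => extC K ∈ B), cyl s K := by
    ext ω
    simp only [Set.mem_iUnion, Finset.mem_filter, Finset.mem_powerset, exists_prop]
    constructor
    · intro hω
      refine ⟨s.filter (fun e => ω e = true), ⟨Finset.filter_subset _ _, ?_⟩,
        mem_cyl_self s ω⟩
      exact (hdep _ _ (extC_agrees _ _ _ (mem_cyl_self s ω))).mpr hω
    · rintro ⟨K, ⟨hKs, hKB⟩, hω⟩
      exact (hdep _ _ (extC_agrees _ _ _ hω)).mp hKB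
  rw [congrArg ν hBeq, measure_biUnion_finset ?_ (fun K _ => measurableSet_cyl s K)]
  · exact Finset.sum_congr rfl fun K hK =>
      measure_cyl hb (Finset.mem_powerset.mp (Finset.mem_filter.mp hK).1)
  · intro K hK K' hK' hne
    simp only [Finset.coe_filter, Set.mem_setOf_eq] at hK hK'
    refine Set.disjoint_left.mpr fun ω hω hω' => hne ?_
    rw [cyl_eq_of_mem (Finset.mem_powerset.mp hK.1) hω,
      cyl_eq_of_mem (Finset.mem_powerset.mp hK'.1) hω']

lemma Wt_nonneg {q : ℝ} (hq : 0 ≤ q) (hq1 : q ≤ 1) (m k : ℕ) : 0 ≤ Wt q m k :=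
  mul_nonneg (pow_nonneg hq _) (pow_nonneg (by linarith) _)

lemma measure_toReal_eq_sum {q : ℝ} {ν : Measure (Config d)} (hb : IsBernoulli d q ν)
    (hq : 0 ≤ q) (hq1 : q ≤ 1)
    (s : Finset (Edge d)) (B : Set (Config d))
    (hdep : ∀ ω ω' : Config d, (∀ e ∈ s, ω e = ω' e) → (ω ∈ B ↔ ω' ∈ B)) :
    (ν B).toReal = ∑ K ∈ s.powerset.filter (fun K => extC K ∈ B), Wt q s.card K.card := by
  rw [measure_eq_sum hb s B hdep, ENNReal.toReal_sum (fun K _ => ENNReal.ofReal_ne_top)]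
  exact Finset.sum_congr rfl fun K _ => ENNReal.toReal_ofReal (Wt_nonneg hq hq1 _ _)

lemma sum_Wt_powerset {q : ℝ} {ν : Measure (Config d)} (hb : IsBernoulli d q ν)
    (hq : 0 ≤ q) (hq1 : q ≤ 1) (s : Finset (Edge d)) :
    ∑ K ∈ s.powerset, Wt q s.card K.card = 1 := by
  have h := measure_toReal_eq_sum hb hq hq1 s Set.univ (fun _ _ _ => Iff.rfl)
  haveI := hb.1
  rw [measure_univ, ENNReal.toReal_one] at h
  simp only [Set.mem_univ, Finset.filter_true] at h
  exact h.symm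

/-- Integral bridge: expectation of a function determined by the edges in `s`. -/
lemma integral_eq_sum {q : ℝ} {ν : Measure (Config d)} (hb : IsBernoulli d q ν)
    (hq : 0 ≤ q) (hq1 : q ≤ 1) (s : Finset (Edge d)) (f : Config d → ℝ)
    (hdep : ∀ ω ω' : Config d, (∀ e ∈ s, ω e = ω' e) → f ω = f ω') :
    ∫ ω, f ω ∂ν = ∑ K ∈ s.powerset, Wt q s.card K.card * f (extC K) := by
  haveI := hb.1
  have hfeq : f = fun ω => ∑ K ∈ s.powerset,
      Set.indicator (cyl s K) (fun _ => f (extC K)) ω := by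
    funext ω
    rw [Finset.sum_eq_single (s.filter (fun e => ω e = true))]
    · rw [Set.indicator_of_mem (mem_cyl_self s ω)]
      exact hdep _ _ fun e he => (extC_agrees _ _ _ (mem_cyl_self s ω) e he).symm
    · intro K hK hne
      refine Set.indicator_of_notMem (fun hω => hne ?_) _
      exact cyl_eq_of_mem (Finset.mem_powerset.mp hK) hω
    · intro h
      exact absurd (Finset.mem_powerset.mpr (Finset.filter_subset _ _)) h
  have hmain : ∫ ω, f ω ∂ν = ∑ K ∈ s.powerset, (ν (cyl s K)).toReal * f (extC K) := by
    conv_lhs => rw [hfeq]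
    rw [integral_finset_sum _ (fun K _ =>
      (integrable_const _).indicator (measurableSet_cyl s K))]
    exact Finset.sum_congr rfl fun K _ => by
      rw [integral_indicator_const _ (measurableSet_cyl s K), smul_eq_mul]; rfl
  rw [hmain]
  exact Finset.sum_congr rfl fun K hK => by
    rw [measure_cyl hb (Finset.mem_powerset.mp hK),
      ENNReal.toReal_ofReal (Wt_nonneg hq hq1 _ _)]

end Bridge
section Deriv

open scoped Classical

variable {d : ℕ}

/-- configurations (as edge subsets of `FE`) realizing `{0 ↔ ∂Λ_n}`. -/
noncomputable def BS (d n : ℕ) : Finset (Finset (Edge d)) :=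
  (FE d n).powerset.filter (fun K => extC K ∈ ZeroToBoundary d n)

/-- configurations not realizing `{0 ↔ ∂Λ_n}`. -/
noncomputable def NS (d n : ℕ) : Finset (Finset (Edge d)) :=
  (FE d n).powerset.filter (fun K => extC K ∉ ZeroToBoundary d n)

/-- the number of closed edges whose opening realizes `{0 ↔ ∂Λ_n}`. -/
noncomputable def Ncnt (d n : ℕ) (K : Finset (Edge d)) : ℕ :=
  ((FE d n).filter (fun e => e ∉ K ∧ extC (insert e K) ∈ ZeroToBoundary d n)).card

/-- the derivative. -/
noncomputable def Dval (d n : ℕ) (p : ℝ) : ℝ :=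
  ∑ K ∈ BS d n, Wt p (FE d n).card K.card *
    ((K.card : ℝ) / p - (((FE d n).card - K.card : ℕ) : ℝ) / (1 - p))

lemma cast_mul_pow_pred {p : ℝ} (hp : p ≠ 0) (k : ℕ) :
    (k : ℝ) * p ^ (k - 1) = (k : ℝ) / p * p ^ k := by
  cases k with
  | zero => simp
  | succ k' =>
    have : p ^ (k' + 1) = p * p ^ k' := by ring
    rw [this, Nat.add_sub_cancel, div_mul_eq_mul_div, mul_div_assoc, mul_div_cancel_left₀ _ hp]

lemma hasDerivAt_Wt {p : ℝ} (hp : p ∈ Set.Ioo (0 : ℝ) 1) (m k : ℕ) (hk : k ≤ m) :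
    HasDerivAt (fun q => Wt q m k)
      (Wt p m k * ((k : ℝ) / p - ((m - k : ℕ) : ℝ) / (1 - p))) p := by
  obtain ⟨hp0, hp1⟩ := hp
  have hp0' : p ≠ 0 := ne_of_gt hp0
  have hp1' : (1 : ℝ) - p ≠ 0 := by linarith
  have h1 : HasDerivAt (fun q : ℝ => q ^ k) ((k : ℝ) * p ^ (k - 1)) p := hasDerivAt_pow k p
  have h2 : HasDerivAt (fun q : ℝ => (1 - q) ^ (m - k))
      (((m - k : ℕ) : ℝ) * (1 - p) ^ (m - k - 1) * (-1)) p :=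
    ((hasDerivAt_id p).const_sub 1).pow (m - k)
  have h3 := h1.fun_mul h2
  refine h3.congr_deriv ?_
  rw [Wt, cast_mul_pow_pred hp0' k, cast_mul_pow_pred hp1' (m - k)]
  ring

lemma hasDerivAt_sumWt {n : ℕ} {p : ℝ} (hp : p ∈ Set.Ioo (0 : ℝ) 1) :
    HasDerivAt (fun q => ∑ K ∈ BS d n, Wt q (FE d n).card K.card) (Dval d n p) p := by
  apply HasDerivAt.fun_sum
  intro K hK
  exact hasDerivAt_Wt hp _ _ (Finset.card_le_card (Finset.mem_powerset.mp
    (Finset.mem_filter.mp hK).1))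

lemma theta_eq {n : ℕ} {q : ℝ} (hq : q ∈ Set.Ioo (0 : ℝ) 1) {ν : Measure (Config d)}
    (hb : IsBernoulli d q ν) :
    (ν (ZeroToBoundary d n)).toReal = ∑ K ∈ BS d n, Wt q (FE d n).card K.card := by
  rw [measure_toReal_eq_sum hb (le_of_lt hq.1) (le_of_lt hq.2) (FE d n) _
    (fun ω ω' h => zeroToBoundary_congr h)]
  rfl

end Deriv

section Russo

open scoped Classical

variable {d : ℕ}

lemma Wt_flip {p : ℝ} (hp : p ∈ Set.Ioo (0 : ℝ) 1) {m k : ℕ} (hk1 : 1 ≤ k) (hkm : k ≤ m) :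
    Wt p m k / p = Wt p m (k - 1) / (1 - p) := by
  obtain ⟨hp0, hp1⟩ := hp
  have hp1' : (0 : ℝ) < 1 - p := by linarith
  obtain ⟨k', rfl⟩ : ∃ k', k = k' + 1 := ⟨k - 1, (Nat.succ_pred_eq_of_pos hk1).symm⟩
  have hmk : m - k' = (m - (k' + 1)) + 1 := by omega
  rw [Wt, Wt]
  simp only [Nat.add_sub_cancel]
  rw [hmk, pow_succ, pow_succ]
  field_simp

lemma extC_insert_mono {n : ℕ} (e : Edge d) (K : Finset (Edge d))
    (h : extC K ∈ ZeroToBoundary d n) : extC (insert e K) ∈ ZeroToBoundary d n := by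
  rw [zeroToBoundary_iff] at h ⊢
  refine CB_mono (fun e' he' => ?_) h
  simp only [extC, decide_eq_true_eq] at he' ⊢
  exact Finset.mem_insert_of_mem he'

lemma Dval_eq {n : ℕ} {p : ℝ} (hp : p ∈ Set.Ioo (0 : ℝ) 1) :
    Dval d n p = (1 / (1 - p)) * ∑ K ∈ NS d n, Wt p (FE d n).card K.card * (Ncnt d n K : ℝ) := by
  obtain ⟨hp0, hp1⟩ := hp
  have hp0' : p ≠ 0 := ne_of_gt hp0
  have hp1' : (0 : ℝ) < 1 - p := by linarith
  set m := (FE d n).card with hm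
  set De : Edge d → Finset (Finset (Edge d)) := fun e =>
    (FE d n).powerset.filter (fun K => e ∉ K ∧ extC (insert e K) ∈ ZeroToBoundary d n)
    with hDe
  set BSin : Edge d → Finset (Finset (Edge d)) := fun e =>
    (BS d n).filter (fun K => e ∈ K) with hBSin
  set BSout : Edge d → Finset (Finset (Edge d)) := fun e =>
    (BS d n).filter (fun K => e ∉ K) with hBSout
  set Pive : Edge d → Finset (Finset (Edge d)) := fun e =>
    (NS d n).filter (fun K => e ∉ K ∧ extC (insert e K) ∈ ZeroToBoundary d n) with hPive
  have hBSsub : ∀ K ∈ BS d n, K ⊆ FE d n := fun K hK =>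
    Finset.mem_powerset.mp (Finset.mem_filter.mp hK).1
  -- Step 1: split
  have step1 : Dval d n p = (∑ K ∈ BS d n, Wt p m K.card * ((K.card : ℝ) / p))
      - ∑ K ∈ BS d n, Wt p m K.card * (((m - K.card : ℕ) : ℝ) / (1 - p)) := by
    rw [Dval, ← Finset.sum_sub_distrib]
    exact Finset.sum_congr rfl fun K _ => by ring
  -- Step 2: first sum as double sum over the edge that is open
  have step2 : ∑ K ∈ BS d n, Wt p m K.card * ((K.card : ℝ) / p)
      = ∑ e ∈ FE d n, ∑ K ∈ BSin e, Wt p m K.card / p := by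
    have h1 : ∀ K ∈ BS d n, Wt p m K.card * ((K.card : ℝ) / p)
        = ∑ e ∈ FE d n, (if e ∈ K then Wt p m K.card / p else 0) := by
      intro K hK
      rw [Finset.sum_ite_mem, (Finset.inter_eq_right).mpr (hBSsub K hK),
        Finset.sum_const, nsmul_eq_mul]
      ring
    rw [Finset.sum_congr rfl h1, Finset.sum_comm]
    exact Finset.sum_congr rfl fun e _ => (Finset.sum_filter _ _).symm
  -- Step 3: second sum as double sum over the edge that is closed
  have step3 : ∑ K ∈ BS d n, Wt p m K.card * (((m - K.card : ℕ) : ℝ) / (1 - p))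
      = ∑ e ∈ FE d n, ∑ K ∈ BSout e, Wt p m K.card / (1 - p) := by
    have h1 : ∀ K ∈ BS d n, Wt p m K.card * (((m - K.card : ℕ) : ℝ) / (1 - p))
        = ∑ e ∈ FE d n, (if e ∉ K then Wt p m K.card / (1 - p) else 0) := by
      intro K hK
      rw [← Finset.sum_filter, Finset.sum_const, nsmul_eq_mul, ← Finset.sdiff_eq_filter,
        Finset.card_sdiff_of_subset (hBSsub K hK)]
      ring
    rw [Finset.sum_congr rfl h1, Finset.sum_comm]
    exact Finset.sum_congr rfl fun e _ => (Finset.sum_filter _ _).symm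
  -- Step 4: flip bijection
  have step4 : ∀ e ∈ FE d n, ∑ K ∈ BSin e, Wt p m K.card / p
      = ∑ K ∈ De e, Wt p m K.card / (1 - p) := by
    intro e he
    refine Finset.sum_nbij' (fun K => K.erase e) (fun K => insert e K) ?_ ?_ ?_ ?_ ?_
    · intro K hK
      simp only [hBSin, Finset.mem_filter, BS, Finset.mem_powerset] at hK
      obtain ⟨⟨hsub, hA⟩, heK⟩ := hK
      simp only [hDe, Finset.mem_filter, Finset.mem_powerset]
      refine ⟨(Finset.erase_subset e K).trans hsub, Finset.notMem_erase e K, ?_⟩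
      rw [Finset.insert_erase heK]
      exact hA
    · intro K hK
      simp only [hDe, Finset.mem_filter, Finset.mem_powerset] at hK
      obtain ⟨hsub, heK, hA⟩ := hK
      simp only [hBSin, Finset.mem_filter, BS, Finset.mem_powerset]
      exact ⟨⟨Finset.insert_subset he hsub, hA⟩, Finset.mem_insert_self e K⟩
    · intro K hK
      simp only [hBSin, Finset.mem_filter] at hK
      exact Finset.insert_erase hK.2
    · intro K hK
      simp only [hDe, Finset.mem_filter] at hK
      exact Finset.erase_insert hK.2.1
    · intro K hK
      simp only [hBSin, Finset.mem_filter] at hK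
      rw [Finset.card_erase_of_mem hK.2]
      exact Wt_flip ⟨hp0, hp1⟩ (Nat.one_le_iff_ne_zero.mpr
        (Finset.card_ne_zero_of_mem hK.2)) (Finset.card_le_card (hBSsub K hK.1))
  -- Step 5: subset and difference
  have step5 : ∀ e ∈ FE d n, ∑ K ∈ De e, Wt p m K.card / (1 - p)
      - ∑ K ∈ BSout e, Wt p m K.card / (1 - p)
      = ∑ K ∈ Pive e, Wt p m K.card / (1 - p) := by
    intro e he
    have hsub : BSout e ⊆ De e := by
      intro K hK
      simp only [hBSout, Finset.mem_filter, BS, Finset.mem_powerset] at hK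
      obtain ⟨⟨hsubK, hA⟩, heK⟩ := hK
      simp only [hDe, Finset.mem_filter, Finset.mem_powerset]
      exact ⟨hsubK, heK, extC_insert_mono e K hA⟩
    have hdiff : De e \ BSout e = Pive e := by
      ext K
      simp only [Finset.mem_sdiff, hDe, hBSout, hPive, Finset.mem_filter,
        Finset.mem_powerset, BS, NS]
      constructor
      · rintro ⟨⟨hsubK, heK, hA⟩, hnot⟩
        exact ⟨⟨hsubK, fun hAK => hnot ⟨⟨hsubK, hAK⟩, heK⟩⟩, heK, hA⟩
      · rintro ⟨⟨hsubK, hnA⟩, heK, hA⟩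
        exact ⟨⟨hsubK, heK, hA⟩, fun h => hnA h.1.2⟩
    rw [← hdiff, eq_comm, eq_sub_iff_add_eq]
    exact Finset.sum_sdiff hsub
  -- Step 6: reorganize to Ncnt
  have step6 : ∑ e ∈ FE d n, ∑ K ∈ Pive e, Wt p m K.card
      = ∑ K ∈ NS d n, Wt p m K.card * (Ncnt d n K : ℝ) := by
    have h1 : ∀ e ∈ FE d n, ∑ K ∈ Pive e, Wt p m K.card
        = ∑ K ∈ NS d n, (if e ∉ K ∧ extC (insert e K) ∈ ZeroToBoundary d n
            then Wt p m K.card else 0) := by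
      intro e _
      exact Finset.sum_filter _ _
    rw [Finset.sum_congr rfl h1, Finset.sum_comm]
    refine Finset.sum_congr rfl fun K _ => ?_
    rw [← Finset.sum_filter, Finset.sum_const, nsmul_eq_mul, Ncnt, mul_comm]
  -- Put it together
  rw [step1, step2, step3, ← Finset.sum_sub_distrib,
    Finset.sum_congr rfl (fun e he => (step4 e he).symm ▸ step5 e he), ← step6,
    Finset.mul_sum]
  refine Finset.sum_congr rfl fun e he => ?_
  rw [Finset.mul_sum]
  exact Finset.sum_congr rfl fun K _ => by ring

lemma sum_le_Dval {n : ℕ} {p : ℝ} (hp : p ∈ Set.Ioo (0 : ℝ) 1) :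
    ∑ K ∈ NS d n, Wt p (FE d n).card K.card * (Ncnt d n K : ℝ) ≤ Dval d n p := by
  rw [Dval_eq hp]
  have hS : 0 ≤ ∑ K ∈ NS d n, Wt p (FE d n).card K.card * (Ncnt d n K : ℝ) :=
    Finset.sum_nonneg fun K _ => mul_nonneg
      (Wt_nonneg (le_of_lt hp.1) (le_of_lt hp.2) _ _) (Nat.cast_nonneg _)
  have h1 : (1 : ℝ) ≤ 1 / (1 - p) := by
    rw [le_div_iff₀ (by linarith [hp.2])]
    linarith [hp.1]
  exact le_mul_of_one_le_left hS h1

end Russo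
section Cluster

open scoped Classical

variable {d : ℕ}

/-- vertices of the box not connected to the boundary. -/
noncomputable def Uset (d n : ℕ) (ω : Config d) : Finset (Vertex d) :=
  (boxFinset d n).filter (fun v => ¬ CB n ω v)

/-- reachability from the origin within `Uset`. -/
def ReachU (d n : ℕ) (ω : Config d) (v : Vertex d) : Prop :=
  Relation.ReflTransGen (fun a b => adj a b ∧ a ∈ Uset d n ω ∧ b ∈ Uset d n ω) (origin d) v

/-- the component of the origin among vertices not connected to the boundary. -/
noncomputable def Tset (d n : ℕ) (ω : Config d) : Finset (Vertex d) :=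
  (Uset d n ω).filter (ReachU d n ω)

/-- the edges with both endpoints in `T`. -/
noncomputable def SEdges (d n : ℕ) (T : Finset (Vertex d)) : Finset (Edge d) :=
  (FE d n).filter (fun e => ∀ v ∈ (e : Sym2 (Vertex d)), v ∈ T)

lemma mem_Uset {n : ℕ} {ω : Config d} {v : Vertex d} :
    v ∈ Uset d n ω ↔ v ∈ box d n ∧ ¬ CB n ω v := by
  simp [Uset, Finset.mem_filter, mem_boxFinset]

lemma Uset_neighbor_box {n : ℕ} {ω : Config d} {v y : Vertex d}
    (hv : v ∈ Uset d n ω) (h : adj v y) : y ∈ box d n := by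
  rw [mem_Uset] at hv
  by_contra hy
  exact hv.2 ⟨v, ⟨hv.1, y, h, hy⟩, Relation.ReflTransGen.refl⟩

lemma boundary_not_Uset {n : ℕ} {ω : Config d} {z : Vertex d}
    (hz : z ∈ boxBoundary d n) : z ∉ Uset d n ω := by
  rw [mem_Uset]
  rintro ⟨_, hnc⟩
  exact hnc ⟨z, hz, Relation.ReflTransGen.refl⟩

lemma origin_mem_Tset {n : ℕ} {ω : Config d} (h0 : ¬ CB n ω (origin d)) :
    origin d ∈ Tset d n ω := by
  rw [Tset, Finset.mem_filter]
  exact ⟨mem_Uset.mpr ⟨origin_mem_box n, h0⟩, Relation.ReflTransGen.refl⟩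

lemma Tset_subset_Uset {n : ℕ} {ω : Config d} : Tset d n ω ⊆ Uset d n ω :=
  Finset.filter_subset _ _

lemma mem_Tset_of_adj {n : ℕ} {ω : Config d} {x y : Vertex d}
    (hx : x ∈ Tset d n ω) (h : adj x y) (hy : y ∈ Uset d n ω) : y ∈ Tset d n ω := by
  rw [Tset, Finset.mem_filter] at hx ⊢
  exact ⟨hy, hx.2.tail ⟨h, hx.1, hy⟩⟩

lemma CB_of_ConnB_CB {n : ℕ} {ω : Config d} {x y : Vertex d}
    (hxy : ConnB n ω x y) (hy : CB n ω y) : CB n ω x := by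
  obtain ⟨z, hz, hc⟩ := hy
  exact ⟨z, hz, hxy.trans hc⟩

lemma Tset_boundary {n : ℕ} {ω : Config d} {x y : Vertex d}
    (hx : x ∈ Tset d n ω) (h : adj x y) (hy : y ∉ Tset d n ω) :
    y ∈ box d n ∧ CB n ω y ∧ ω (mkE x y h) = false := by
  have hxU := Tset_subset_Uset hx
  have hyb : y ∈ box d n := Uset_neighbor_box hxU h
  have hyU : y ∉ Uset d n ω := fun hyU => hy (mem_Tset_of_adj hx h hyU)
  have hyC : CB n ω y := by
    rw [mem_Uset] at hyU
    push_neg at hyU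
    exact hyU hyb
  refine ⟨hyb, hyC, ?_⟩
  by_contra hopen
  have hxB : x ∈ box d n := (mem_Uset.mp hxU).1
  have hopen' : ω (mkE x y h) = true := by simpa using hopen
  have : CB n ω x := CB_of_ConnB_CB (Relation.ReflTransGen.single ⟨h, hxB, hyb, hopen'⟩) hyC
  exact (mem_Uset.mp hxU).2 this

lemma SEdges_subset_FE {n : ℕ} {T : Finset (Vertex d)} : SEdges d n T ⊆ FE d n :=
  Finset.filter_subset _ _

lemma SEdges_endpoint {n : ℕ} {T : Finset (Vertex d)} {e : Edge d} (he : e ∈ SEdges d n T)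
    {v : Vertex d} (hv : v ∈ (e : Sym2 (Vertex d))) : v ∈ T :=
  (Finset.mem_filter.mp he).2 v hv

lemma mkE_mem_SEdges {n : ℕ} {T : Finset (Vertex d)} {x y : Vertex d} (h : adj x y)
    (hxb : x ∈ box d n) (hyb : y ∈ box d n) (hx : x ∈ T) (hy : y ∈ T) :
    mkE x y h ∈ SEdges d n T := by
  rw [SEdges, Finset.mem_filter]
  refine ⟨mkE_mem_FE h hxb hyb, fun v hv => ?_⟩
  rcases Sym2.mem_iff.mp hv with rfl | rfl
  · exact hx
  · exact hy

lemma adj_of_edge_eq {e : Edge d} {a b : Vertex d} (h : (e : Sym2 (Vertex d)) = s(a, b)) :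
    adj a b := by
  obtain ⟨x, y, hxy, hval⟩ := e.2
  rw [hval] at h
  rcases Sym2.eq_iff.mp h with ⟨rfl, rfl⟩ | ⟨rfl, rfl⟩
  · exact hxy
  · exact adj_symm hxy

lemma ConnInS_to_ConnB {n : ℕ} {T : Finset (Vertex d)} {ω : Config d} {x y : Vertex d}
    (hc : ConnInS (SEdges d n T) ω x y) : ConnB n ω x y := by
  refine Relation.ReflTransGen.mono ?_ _ _ hc
  rintro a b ⟨e, heS, hopen, hval⟩
  have hadj : adj a b := adj_of_edge_eq hval
  have haB : a ∈ box d n := mem_FE.mp (SEdges_subset_FE heS) a (by rw [hval]; exact Sym2.mem_mk_left a b)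
  have hbB : b ∈ box d n := mem_FE.mp (SEdges_subset_FE heS) b (by rw [hval]; exact Sym2.mem_mk_right a b)
  have hee : mkE a b hadj = e := Subtype.ext hval.symm
  exact ⟨hadj, haB, hbB, by rw [hee]; exact hopen⟩

lemma ConnInS_congr {S : Finset (Edge d)} {ω ω' : Config d}
    (h : ∀ e ∈ S, ω e = ω' e) {x y : Vertex d} (hc : ConnInS S ω x y) : ConnInS S ω' x y := by
  refine Relation.ReflTransGen.mono ?_ _ _ hc
  rintro a b ⟨e, heS, hopen, hval⟩
  exact ⟨e, heS, by rw [← h e heS]; exact hopen, hval⟩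

lemma phiCount_congr {S : Finset (Edge d)} {ω ω' : Config d}
    (h : ∀ e ∈ S, ω e = ω' e) : phiCount S ω = phiCount S ω' := by
  unfold phiCount
  congr 1
  ext u
  exact and_congr_right fun _ =>
    ⟨ConnInS_congr h, ConnInS_congr fun e he => (h e he).symm⟩

lemma Tset_reach {n : ℕ} {ω : Config d} {x : Vertex d} (hx : x ∈ Tset d n ω) :
    Relation.ReflTransGen (SStep (SEdges d n (Tset d n ω))) (origin d) x := by
  have hreach : ReachU d n ω x := (Finset.mem_filter.mp hx).2
  clear hx
  induction hreach with
  | refl => exact Relation.ReflTransGen.refl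
  | @tail a b hab hstep ih =>
    obtain ⟨hadj, haU, hbU⟩ := hstep
    have haT : a ∈ Tset d n ω := Finset.mem_filter.mpr ⟨haU, hab⟩
    have hbT : b ∈ Tset d n ω := Finset.mem_filter.mpr ⟨hbU, hab.tail ⟨hadj, haU, hbU⟩⟩
    refine ih.tail ⟨mkE a b hadj, mkE_mem_SEdges hadj (mem_Uset.mp haU).1
      (mem_Uset.mp hbU).1 haT hbT, rfl⟩

lemma SStep_symm {S : Finset (Edge d)} {a b : Vertex d} (h : SStep S a b) : SStep S b a := by
  obtain ⟨e, heS, hval⟩ := h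
  exact ⟨e, heS, hval.trans Sym2.eq_swap⟩

lemma touches_mem_Tset {n : ℕ} {ω : Config d} {x : Vertex d}
    (hx : touches (SEdges d n (Tset d n ω)) x) : x ∈ Tset d n ω := by
  obtain ⟨e, heS, hxe⟩ := hx
  exact SEdges_endpoint heS hxe

lemma SConnected_SEdges {n : ℕ} (ω : Config d) : SConnected (SEdges d n (Tset d n ω)) := by
  intro x y hx hy
  have hxr := Tset_reach (touches_mem_Tset hx)
  have hyr := Tset_reach (touches_mem_Tset hy)
  have hsymm : Symmetric (SStep (SEdges d n (Tset d n ω))) := fun a b h => SStep_symm h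
  haveI : Std.Symm (SStep (SEdges d n (Tset d n ω))) := ⟨fun a b h => hsymm h⟩
  exact (Std.Symm.symm (r := Relation.ReflTransGen (SStep (SEdges d n (Tset d n ω)))) _ _ hxr).trans hyr

lemma touches_SEdges_origin {n : ℕ} {ω : Config d}
    (hvx : ∃ v ∈ Tset d n ω, v ≠ origin d) : touches (SEdges d n (Tset d n ω)) (origin d) := by
  obtain ⟨v, hvT, hvne⟩ := hvx
  have hreach : ReachU d n ω v := (Finset.mem_filter.mp hvT).2
  rcases hreach.cases_head with heq | ⟨w, ⟨hadj, h0U, hwU⟩, _⟩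
  · exact absurd heq.symm hvne
  · have h0T : origin d ∈ Tset d n ω := Finset.mem_filter.mpr ⟨h0U, Relation.ReflTransGen.refl⟩
    have hwT : w ∈ Tset d n ω := Finset.mem_filter.mpr
      ⟨hwU, Relation.ReflTransGen.single ⟨hadj, h0U, hwU⟩⟩
    exact ⟨mkE (origin d) w hadj, mkE_mem_SEdges hadj (mem_Uset.mp h0U).1
      (mem_Uset.mp hwU).1 h0T hwT, mem_mkE_left _ _ _⟩

end Cluster
section Transfer

open scoped Classical

variable {d : ℕ}

lemma connB_transfer {n : ℕ} {ω ω' : Config d} {T : Finset (Vertex d)}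
    (hagree : ∀ e : Edge d, e ∉ SEdges d n T → ω e = ω' e)
    (hclosed : ∀ x ∈ T, ∀ (y : Vertex d) (h : adj x y), y ∉ T → ω (mkE x y h) = false)
    {u z : Vertex d} (hu : u ∉ T) (hc : ConnB n ω u z) : ConnB n ω' u z := by
  revert hu
  induction hc using Relation.ReflTransGen.head_induction_on with
  | refl => intro _; exact Relation.ReflTransGen.refl
  | @head a c h' htail ih =>
    intro ha
    obtain ⟨hadj, haB, hcB, hopen⟩ := h'
    have hcT : c ∉ T := by
      intro hcT
      have := hclosed c hcT a (adj_symm hadj) ha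
      rw [← mkE_symm a c hadj (adj_symm hadj)] at this
      rw [this] at hopen
      exact Bool.false_ne_true hopen
    have hnotS : mkE a c hadj ∉ SEdges d n T := fun hmem =>
      ha (SEdges_endpoint hmem (mem_mkE_left a c hadj))
    exact (ih hcT).head ⟨hadj, haB, hcB, by rw [← hagree _ hnotS]; exact hopen⟩

lemma connB_confined {n : ℕ} {ω' : Config d} {T : Finset (Vertex d)}
    (hclosed' : ∀ x ∈ T, ∀ (y : Vertex d) (h : adj x y), y ∉ T → ω' (mkE x y h) = false)
    {v z : Vertex d} (hv : v ∈ T) (hc : ConnB n ω' v z) : z ∈ T := by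
  revert hv
  induction hc using Relation.ReflTransGen.head_induction_on with
  | refl => exact id
  | @head a c h' htail ih =>
    intro ha
    obtain ⟨hadj, haB, hcB, hopen⟩ := h'
    by_cases hcT : c ∈ T
    · exact ih hcT
    · have := hclosed' a ha c hadj hcT
      rw [this] at hopen
      exact absurd hopen Bool.false_ne_true

lemma Tset_closed {n : ℕ} (ω : Config d) :
    ∀ x ∈ Tset d n ω, ∀ (y : Vertex d) (h : adj x y), y ∉ Tset d n ω →
      ω (mkE x y h) = false :=
  fun x hx y h hy => (Tset_boundary hx h hy).2.2

lemma Tset_invariant {n : ℕ} {ω ω' : Config d}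
    (hagree : ∀ e : Edge d, e ∉ SEdges d n (Tset d n ω) → ω e = ω' e) :
    Uset d n ω' = Uset d n ω ∧ Tset d n ω' = Tset d n ω := by
  set T := Tset d n ω with hT
  have hclosed := Tset_closed (n := n) ω
  have hclosed' : ∀ x ∈ T, ∀ (y : Vertex d) (h : adj x y), y ∉ T → ω' (mkE x y h) = false := by
    intro x hx y h hy
    have hnotS : mkE x y h ∉ SEdges d n T := fun hmem =>
      hy (SEdges_endpoint hmem (mem_mkE_right x y h))
    rw [← hagree _ hnotS]
    exact hclosed x hx y h hy
  have hagree' : ∀ e : Edge d, e ∉ SEdges d n T → ω' e = ω e := fun e he => (hagree e he).symm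
  have hU : Uset d n ω' = Uset d n ω := by
    ext v
    by_cases hvT : v ∈ T
    · have hvU : v ∈ Uset d n ω := Tset_subset_Uset hvT
      rw [mem_Uset, mem_Uset]
      refine ⟨fun h => ⟨h.1, (mem_Uset.mp hvU).2⟩, fun h => ⟨h.1, ?_⟩⟩
      rintro ⟨z, hz, hconn⟩
      exact boundary_not_Uset hz (Tset_subset_Uset (hT ▸ connB_confined hclosed' hvT hconn))
    · rw [mem_Uset, mem_Uset]
      refine and_congr_right fun _ => not_congr ?_
      constructor
      · rintro ⟨z, hz, hconn⟩
        exact ⟨z, hz, connB_transfer hagree' hclosed' hvT hconn⟩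
      · rintro ⟨z, hz, hconn⟩
        exact ⟨z, hz, connB_transfer hagree hclosed hvT hconn⟩
  refine ⟨hU, ?_⟩
  have hReach : ∀ v, ReachU d n ω' v ↔ ReachU d n ω v := by
    intro v
    constructor
    · exact fun h => Relation.ReflTransGen.mono (r := fun a b => adj a b ∧ a ∈ Uset d n ω' ∧ b ∈ Uset d n ω') (p := fun a b => adj a b ∧ a ∈ Uset d n ω ∧ b ∈ Uset d n ω) (fun a b ⟨h1, h2, h3⟩ => ⟨h1, hU ▸ h2, hU ▸ h3⟩) _ _ h
    · exact fun h => Relation.ReflTransGen.mono (r := fun a b => adj a b ∧ a ∈ Uset d n ω ∧ b ∈ Uset d n ω) (p := fun a b => adj a b ∧ a ∈ Uset d n ω' ∧ b ∈ Uset d n ω') (fun a b ⟨h1, h2, h3⟩ => ⟨h1, hU ▸ h2, hU ▸ h3⟩) _ _ h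
  ext v
  rw [hT]
  simp only [Tset, Finset.mem_filter, hU]
  exact and_congr_right fun _ => hReach v

end Transfer
section Counting

open scoped Classical

variable {d : ℕ}

lemma exists_origin_neighbor (hd : 0 < d) (n : ℕ) (hn : 1 ≤ n) :
    ∃ y : Vertex d, ∃ h : adj (origin d) y, y ∈ box d n ∧ y ≠ origin d := by
  have i0 : Fin d := ⟨0, hd⟩
  refine ⟨fun i => if i = i0 then 1 else 0, ?_, ?_, ?_⟩
  · unfold adj
    have h1 : ∀ i, ((origin d i - (if i = i0 then (1 : ℤ) else 0)).natAbs)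
        = if i = i0 then 1 else 0 := by
      intro i; by_cases h : i = i0 <;> simp [origin, h]
    simp only [h1]
    rw [Finset.sum_ite_eq' Finset.univ i0 (fun _ => 1)]
    simp
  · intro i
    by_cases h : i = i0 <;> simp [h] <;> omega
  · intro heq
    have := congrFun heq i0
    simp [origin] at this
  
lemma extC_mono_insert (e : Edge d) (K : Finset (Edge d)) :
    ∀ e' : Edge d, extC K e' = true → extC (insert e K) e' = true := by
  intro e' h'
  simp only [extC, decide_eq_true_eq] at h' ⊢
  exact Finset.mem_insert_of_mem h'

lemma insert_mem_ZTB {n : ℕ} {K : Finset (Edge d)} {u v : Vertex d} (hadj : adj u v)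
    (hub : u ∈ box d n) (hvb : v ∈ box d n)
    (h0u : ConnB n (extC K) (origin d) u) (hvC : CB n (extC K) v) :
    extC (insert (mkE u v hadj) K) ∈ ZeroToBoundary d n := by
  set e := mkE u v hadj
  set ω' := extC (insert e K)
  rw [zeroToBoundary_iff]
  have hmono := extC_mono_insert e K
  have h0u' : ConnB n ω' (origin d) u := ConnB_mono hmono h0u
  have huv : stepB n ω' u v := ⟨hadj, hub, hvb, by
    simp only [ω', extC, decide_eq_true_eq]
    exact Finset.mem_insert_self e K⟩
  exact CB_of_ConnB_CB (h0u'.tail huv) (CB_mono hmono hvC)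

lemma edge_closed_not_mem {K : Finset (Edge d)} {e : Edge d}
    (h : extC K e = false) : e ∉ K := by
  intro hk
  simp [extC, hk] at h

lemma phiCount_le_Ncnt {n : ℕ} {K : Finset (Edge d)} (hK : K ⊆ FE d n)
    (hne : (SEdges d n (Tset d n (extC K))).Nonempty) :
    phiCount (SEdges d n (Tset d n (extC K))) (extC K) ≤ Ncnt d n K := by
  set ω := extC K with hω
  set T := Tset d n ω with hT
  set SE := SEdges d n T with hSE
  set P : Set (Vertex d) := {u | u ∈ edgeBoundary SE ∧ ConnInS SE ω (origin d) u} with hP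
  have hPsub : P ⊆ ↑T := fun u hu => touches_mem_Tset hu.1.1
  have hPfin : P.Finite := Set.Finite.subset T.finite_toSet hPsub
  obtain ⟨e₀, _⟩ := hne
  set f : Vertex d → Edge d := fun u =>
    if h : ∃ e : Edge d, e ∉ SE ∧ u ∈ (e : Sym2 (Vertex d)) then h.choose else e₀ with hf
  have hmain : ∀ u ∈ P, (f u ∉ SE ∧ u ∈ ((f u) : Sym2 (Vertex d))) ∧
      f u ∈ (FE d n).filter (fun e => e ∉ K ∧ extC (insert e K) ∈ ZeroToBoundary d n) := by
    intro u hu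
    obtain ⟨⟨htouch, e', he'S, hue'⟩, hconn⟩ := hu
    have hex : ∃ e : Edge d, e ∉ SE ∧ u ∈ (e : Sym2 (Vertex d)) := ⟨e', he'S, hue'⟩
    have hfu : f u = hex.choose := dif_pos hex
    have hspec := hex.choose_spec
    rw [← hfu] at hspec
    obtain ⟨hfS, hufu⟩ := hspec
    refine ⟨⟨hfS, hufu⟩, ?_⟩
    obtain ⟨v, hadj, hev⟩ := edge_other (f u) hufu
    have huT : u ∈ T := touches_mem_Tset htouch
    have hub : u ∈ box d n := (mem_Uset.mp (Tset_subset_Uset huT)).1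
    have hvb : v ∈ box d n := Uset_neighbor_box (Tset_subset_Uset huT) hadj
    have hvT : v ∉ T := by
      intro hvT
      exact hfS (by rw [hev]; exact mkE_mem_SEdges hadj hub hvb huT hvT)
    have hb := Tset_boundary huT hadj hvT
    have hclosed : ω (f u) = false := by rw [hev]; exact hb.2.2
    have heK : f u ∉ K := edge_closed_not_mem hclosed
    rw [Finset.mem_filter]
    refine ⟨by rw [hev]; exact mkE_mem_FE hadj hub hvb, heK, ?_⟩
    rw [hev]
    exact insert_mem_ZTB hadj hub hvb (ConnInS_to_ConnB hconn) hb.2.1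
  show P.ncard ≤ Ncnt d n K
  rw [Set.ncard_eq_toFinset_card P hPfin]
  apply Finset.card_le_card_of_injOn f
  · intro u hu
    exact (hmain u (hPfin.mem_toFinset.mp hu)).2
  · intro u hu u' hu' heq
    have h1 := hmain u (hPfin.mem_toFinset.mp hu)
    have h2 := hmain u' (hPfin.mem_toFinset.mp hu')
    by_contra hne'
    have huT : u ∈ T := hPsub (hPfin.mem_toFinset.mp hu)
    have hu'T : u' ∈ T := hPsub (hPfin.mem_toFinset.mp hu')
    obtain ⟨w, hadj, hew⟩ := edge_other (f u) h1.1.2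
    have hu'w : u' ∈ ((f u) : Sym2 (Vertex d)) := heq ▸ h2.1.2
    rw [hew] at hu'w
    rcases Sym2.mem_iff.mp hu'w with h | h
    · exact hne' (h.symm ▸ rfl)
    · subst h
      have hub : u ∈ box d n := (mem_Uset.mp (Tset_subset_Uset huT)).1
      have hwb : u' ∈ box d n := Uset_neighbor_box (Tset_subset_Uset huT) hadj
      exact h1.1.1 (by rw [hew]; exact mkE_mem_SEdges hadj hub hwb huT hu'T)

end Counting
section Fiber

open scoped Classical

variable {d : ℕ}

lemma one_le_Ncnt (hd : 0 < d) {n : ℕ} (hn : 1 ≤ n) {K : Finset (Edge d)}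
    (hA' : ¬ CB n (extC K) (origin d))
    (hnone : ¬ ∃ v ∈ Tset d n (extC K), v ≠ origin d) : 1 ≤ Ncnt d n K := by
  obtain ⟨y, hadj, hyb, hyne⟩ := exists_origin_neighbor hd n hn
  have h0T := origin_mem_Tset (ω := extC K) hA'
  have hyT : y ∉ Tset d n (extC K) := fun h => hnone ⟨y, h, hyne⟩
  have hb := Tset_boundary h0T hadj hyT
  have heK : mkE (origin d) y hadj ∉ K := edge_closed_not_mem hb.2.2
  have hins := insert_mem_ZTB (K := K) hadj (origin_mem_box n) hyb
    Relation.ReflTransGen.refl hb.2.1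
  exact Finset.card_pos.mpr ⟨mkE (origin d) y hadj,
    Finset.mem_filter.mpr ⟨mkE_mem_FE hadj (origin_mem_box n) hyb, heK, hins⟩⟩

lemma SEdges_nonempty_of {n : ℕ} {ω : Config d}
    (hvx : ∃ v ∈ Tset d n ω, v ≠ origin d) : (SEdges d n (Tset d n ω)).Nonempty := by
  obtain ⟨e, he, _⟩ := touches_SEdges_origin hvx
  exact ⟨e, he⟩

lemma mem_NS_iff {n : ℕ} {K : Finset (Edge d)} :
    K ∈ NS d n ↔ K ⊆ FE d n ∧ ¬ CB n (extC K) (origin d) := by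
  rw [NS, Finset.mem_filter, Finset.mem_powerset, zeroToBoundary_iff]

lemma fiber_transfer {n : ℕ} {K K' : Finset (Edge d)} (hK : K ∈ NS d n)
    (hK' : K' ⊆ FE d n)
    (hagree : K' \ SEdges d n (Tset d n (extC K)) = K \ SEdges d n (Tset d n (extC K))) :
    K' ∈ NS d n ∧ Tset d n (extC K') = Tset d n (extC K) := by
  set T := Tset d n (extC K) with hT
  set SE := SEdges d n T with hSE
  have hagree' : ∀ e : Edge d, e ∉ SE → extC K e = extC K' e := by
    intro e he
    have : e ∈ K ↔ e ∈ K' := by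
      constructor
      · intro h
        have : e ∈ K \ SE := Finset.mem_sdiff.mpr ⟨h, he⟩
        rw [← hagree] at this
        exact (Finset.mem_sdiff.mp this).1
      · intro h
        have : e ∈ K' \ SE := Finset.mem_sdiff.mpr ⟨h, he⟩
        rw [hagree] at this
        exact (Finset.mem_sdiff.mp this).1
    simp only [extC]
    exact decide_eq_decide.mpr this
  obtain ⟨hU, hT'⟩ := Tset_invariant (n := n) (ω := extC K) (ω' := extC K') hagree'
  obtain ⟨hKsub, hA⟩ := mem_NS_iff.mp hK
  have h0U : origin d ∈ Uset d n (extC K) := mem_Uset.mpr ⟨origin_mem_box n, hA⟩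
  have hA' : ¬ CB n (extC K') (origin d) := (mem_Uset.mp (hU ▸ h0U : _)).2
  exact ⟨mem_NS_iff.mpr ⟨hK', hA'⟩, hT'⟩

lemma Wt_split (p : ℝ) {m se a b : ℕ} (hse : se ≤ m) (ha : a ≤ m - se) (hb : b ≤ se) :
    Wt p m (a + b) = Wt p (m - se) a * Wt p se b := by
  have hexp : m - (a + b) = (m - se - a) + (se - b) := by omega
  rw [Wt, Wt, Wt, hexp, pow_add, pow_add]
  ring

/-- Factorization of a fiber sum whose integrand depends only on the edges inside `SE`. -/
lemma fiber_sum {n : ℕ} (p : ℝ) {T : Finset (Vertex d)}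
    (F : Finset (Edge d) → ℝ)
    (hF : ∀ K ⊆ FE d n, F K = F (K ∩ SEdges d n T)) :
    ∑ K ∈ (NS d n).filter (fun K => Tset d n (extC K) = T),
        Wt p (FE d n).card K.card * F K
      = (∑ J ∈ ((NS d n).filter (fun K => Tset d n (extC K) = T)).image
            (fun K => K \ SEdges d n T),
          Wt p ((FE d n).card - (SEdges d n T).card) J.card) *
        ∑ L ∈ (SEdges d n T).powerset, Wt p (SEdges d n T).card L.card * F L := by
  set SE := SEdges d n T with hSE
  set Φ := (NS d n).filter (fun K => Tset d n (extC K) = T) with hΦ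
  set m := (FE d n).card with hm
  set se := SE.card with hse
  have hSEsub : SE ⊆ FE d n := SEdges_subset_FE
  have hsem : se ≤ m := Finset.card_le_card hSEsub
  have hΦsub : ∀ K ∈ Φ, K ⊆ FE d n := fun K hK =>
    (Finset.mem_powerset.mp (Finset.mem_filter.mp (Finset.mem_filter.mp hK).1).1)
  -- membership transfer within the fiber
  have hmemtrans : ∀ K ∈ Φ, ∀ K' ⊆ FE d n, K' \ SE = K \ SE → K' ∈ Φ := by
    intro K hK K' hK'sub hag
    obtain ⟨hKNS, hKT⟩ := Finset.mem_filter.mp hK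
    have := fiber_transfer hKNS hK'sub (by rw [hKT]; exact hag)
    rw [hKT] at this
    exact Finset.mem_filter.mpr ⟨this.1, this.2⟩
  have key : ∑ K ∈ Φ, Wt p m K.card * F K
      = ∑ x ∈ (Φ.image (fun K => K \ SE)) ×ˢ SE.powerset,
          Wt p (m - se) x.1.card * (Wt p se x.2.card * F x.2) := by
    refine Finset.sum_nbij' (fun K => (K \ SE, K ∩ SE)) (fun x => x.1 ∪ x.2) ?_ ?_ ?_ ?_ ?_
    · intro K hK
      rw [Finset.mem_product]
      exact ⟨Finset.mem_image_of_mem _ hK,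
        Finset.mem_powerset.mpr (Finset.inter_subset_right)⟩
    · rintro ⟨J, L⟩ hx
      rw [Finset.mem_product] at hx
      obtain ⟨hJ, hL⟩ := hx
      obtain ⟨K₁, hK₁, rfl⟩ := Finset.mem_image.mp hJ
      have hLsub := Finset.mem_powerset.mp hL
      refine hmemtrans K₁ hK₁ _ ?_ ?_
      · exact Finset.union_subset ((Finset.sdiff_subset).trans (hΦsub K₁ hK₁))
          (hLsub.trans hSEsub)
      · rw [Finset.union_sdiff_distrib, Finset.sdiff_idem,
          Finset.sdiff_eq_empty_iff_subset.mpr hLsub, Finset.union_empty]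
    · intro K _
      exact Finset.sdiff_union_inter K SE
    · rintro ⟨J, L⟩ hx
      rw [Finset.mem_product] at hx
      obtain ⟨hJ, hL⟩ := hx
      obtain ⟨K₁, hK₁, rfl⟩ := Finset.mem_image.mp hJ
      have hLsub := Finset.mem_powerset.mp hL
      have h1 : (K₁ \ SE ∪ L) \ SE = K₁ \ SE := by
        rw [Finset.union_sdiff_distrib, Finset.sdiff_idem,
          Finset.sdiff_eq_empty_iff_subset.mpr hLsub, Finset.union_empty]
      have h2 : (K₁ \ SE ∪ L) ∩ SE = L := by
        rw [Finset.union_inter_distrib_right,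
          (Finset.inter_eq_left).mpr hLsub]
        have : K₁ \ SE ∩ SE = ∅ := Finset.sdiff_inter_self _ _
        rw [this, Finset.empty_union]
      dsimp only
      rw [h1, h2]
    · intro K hK
      have hKsub := hΦsub K hK
      have hcard : K.card = (K \ SE).card + (K ∩ SE).card :=
        (Finset.card_sdiff_add_card_inter K SE).symm
      have ha : (K \ SE).card ≤ m - se := by
        have : K \ SE ⊆ FE d n \ SE := Finset.sdiff_subset_sdiff hKsub (le_refl _)
        have := Finset.card_le_card this
        rwa [Finset.card_sdiff_of_subset hSEsub] at this
      have hb : (K ∩ SE).card ≤ se := Finset.card_le_card (Finset.inter_subset_right)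
      rw [hcard, Wt_split p hsem ha hb, hF K hKsub]
      ring
  rw [key, Finset.sum_product, Finset.sum_mul]
  refine Finset.sum_congr rfl fun J _ => ?_
  rw [Finset.mul_sum]

end Fiber

/-- For every `d ≥ 2`, `p ∈ (0,1)` and `n ≥ 1`, the map `p ↦ ℙ_p[0 ↔ ∂Λ_n]` is
differentiable and its derivative is at least `(inf_S φ_p(S)) · (1 − ℙ_p[0 ↔ ∂Λ_n])`,
the infimum running over all finite connected sets `S` of edges with an edge incident
to `0`, together with `S = ∅` (for which `φ_p(∅) = 1` by convention). -/
theorem derivative_lower_bound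
    (d : ℕ) (hd : 2 ≤ d)
    (μ : ℝ → Measure (Config d))
    (hμ : ∀ p ∈ Set.Ioo (0 : ℝ) 1, IsBernoulli d p (μ p))
    (p : ℝ) (hp : p ∈ Set.Ioo (0 : ℝ) 1) (n : ℕ) (hn : 1 ≤ n) :
    ∃ D : ℝ,
      HasDerivAt (fun q : ℝ => (μ q (ZeroToBoundary d n)).toReal) D p ∧
      sInf (insert (1 : ℝ)
          {x : ℝ | ∃ S : Finset (Edge d),
            S.Nonempty ∧ SConnected S ∧ touches S (origin d) ∧ x = phiS (μ p) S}) *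
        (1 - (μ p (ZeroToBoundary d n)).toReal) ≤ D := by
  classical
  have hd0 : 0 < d := lt_of_lt_of_le two_pos hd
  have hb := hμ p hp
  set m := (FE d n).card with hm
  refine ⟨Dval d n p, ?_, ?_⟩
  · refine (hasDerivAt_sumWt hp).congr_of_eventuallyEq ?_
    filter_upwards [Ioo_mem_nhds hp.1 hp.2] with q hq
    exact theta_eq hq (hμ q hq)
  · set Sset : Set ℝ := insert (1 : ℝ)
      {x : ℝ | ∃ S : Finset (Edge d),
        S.Nonempty ∧ SConnected S ∧ touches S (origin d) ∧ x = phiS (μ p) S} with hSset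
    set I := sInf Sset with hI
    have hIbdd : BddBelow Sset := by
      refine ⟨0, ?_⟩
      rintro x (rfl | ⟨S, _, _, _, rfl⟩)
      · exact zero_le_one
      · exact integral_nonneg fun ω => Nat.cast_nonneg _
    have hIle1 : I ≤ 1 := csInf_le hIbdd (Set.mem_insert _ _)
    have hI0 : (0 : ℝ) ≤ I := le_csInf ⟨1, Set.mem_insert _ _⟩ (by
      rintro x (rfl | ⟨S, _, _, _, rfl⟩)
      · exact zero_le_one
      · exact integral_nonneg fun ω => Nat.cast_nonneg _)
    -- 1 - θ
    have hθ : (μ p (ZeroToBoundary d n)).toReal = ∑ K ∈ BS d n, Wt p m K.card :=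
      theta_eq hp hb
    have hsplit : (∑ K ∈ BS d n, Wt p m K.card) + ∑ K ∈ NS d n, Wt p m K.card = 1 := by
      rw [← sum_Wt_powerset hb hp.1.le hp.2.le (FE d n)]
      exact Finset.sum_filter_add_sum_filter_not _ _ _
    have h1θ : 1 - (μ p (ZeroToBoundary d n)).toReal = ∑ K ∈ NS d n, Wt p m K.card := by
      rw [hθ]; linarith
    -- the per-configuration count
    set cnt : Finset (Edge d) → ℝ := fun K =>
      if ∃ v ∈ Tset d n (extC K), v ≠ origin d
      then (phiCount (SEdges d n (Tset d n (extC K))) (extC K) : ℝ) else 1 with hcnt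
    -- Step A : pointwise bound
    have stepA : ∑ K ∈ NS d n, Wt p m K.card * cnt K ≤ Dval d n p := by
      refine le_trans ?_ (sum_le_Dval hp)
      refine Finset.sum_le_sum fun K hK => ?_
      refine mul_le_mul_of_nonneg_left ?_ (Wt_nonneg hp.1.le hp.2.le _ _)
      obtain ⟨hKsub, hA'⟩ := mem_NS_iff.mp hK
      by_cases hc : ∃ v ∈ Tset d n (extC K), v ≠ origin d
      · rw [hcnt]
        simp only [if_pos hc]
        exact_mod_cast Nat.cast_le.mpr (phiCount_le_Ncnt hKsub (SEdges_nonempty_of hc))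
      · rw [hcnt]
        simp only [if_neg hc]
        exact_mod_cast Nat.one_le_cast.mpr (one_le_Ncnt hd0 hn hA' hc)
    -- Step B : fiberwise lower bound
    have stepB : I * ∑ K ∈ NS d n, Wt p m K.card
        ≤ ∑ K ∈ NS d n, Wt p m K.card * cnt K := by
      set Tims := (NS d n).image (fun K => Tset d n (extC K)) with hTims
      have hmaps : ∀ K ∈ NS d n, Tset d n (extC K) ∈ Tims :=
        fun K hK => Finset.mem_image_of_mem _ hK
      rw [← Finset.sum_fiberwise_of_maps_to hmaps (fun K => Wt p m K.card * cnt K),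
        ← Finset.sum_fiberwise_of_maps_to hmaps (fun K => Wt p m K.card), Finset.mul_sum]
      refine Finset.sum_le_sum fun T hT => ?_
      obtain ⟨K₀, hK₀NS, hT₀⟩ := Finset.mem_image.mp hT
      set Φ := (NS d n).filter (fun K => Tset d n (extC K) = T) with hΦ
      set SE := SEdges d n T with hSEd
      have hmass0 : (0 : ℝ) ≤ ∑ K ∈ Φ, Wt p m K.card :=
        Finset.sum_nonneg fun K _ => Wt_nonneg hp.1.le hp.2.le _ _
      -- mass factorization (with F = const 1)
      have hmass : ∑ K ∈ Φ, Wt p m K.card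
          = ∑ J ∈ Φ.image (fun K => K \ SE), Wt p (m - SE.card) J.card := by
        have h1 := fiber_sum (n := n) p (T := T) (fun _ => (1 : ℝ)) (fun _ _ => rfl)
        have h2 : ∑ L ∈ SE.powerset, Wt p SE.card L.card * 1 = 1 := by
          simp only [mul_one]
          exact sum_Wt_powerset hb hp.1.le hp.2.le SE
        rw [h2, mul_one] at h1
        simpa only [mul_one] using h1
      by_cases hc : ∃ v ∈ T, v ≠ origin d
      · -- the nonempty case
        have hcT : ∃ v ∈ Tset d n (extC K₀), v ≠ origin d := by rw [hT₀]; exact hc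
        have hne : SE.Nonempty := by
          have := SEdges_nonempty_of hcT
          rwa [hT₀] at this
        have hconn : SConnected SE := by
          have := SConnected_SEdges (n := n) (extC K₀)
          rwa [hT₀] at this
        have htouch : touches SE (origin d) := by
          have := touches_SEdges_origin hcT
          rwa [hT₀] at this
        have hphiS : phiS (μ p) SE
            = ∑ L ∈ SE.powerset, Wt p SE.card L.card * (phiCount SE (extC L) : ℝ) := by
          rw [phiS]
          exact integral_eq_sum hb hp.1.le hp.2.le SE _
            (fun ω ω' h => by rw [phiCount_congr h])
        have hFdep : ∀ K ⊆ FE d n, ((phiCount SE (extC K) : ℝ))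
            = (phiCount SE (extC (K ∩ SE)) : ℝ) := by
          intro K _
          congr 1
          refine phiCount_congr fun e he => ?_
          simp only [extC]
          exact decide_eq_decide.mpr
            ⟨fun h => Finset.mem_inter.mpr ⟨h, he⟩, fun h => (Finset.mem_inter.mp h).1⟩
        have hfib := fiber_sum (n := n) p (T := T)
          (fun K => (phiCount SE (extC K) : ℝ)) hFdep
        have hcnteq : ∀ K ∈ Φ, cnt K = (phiCount SE (extC K) : ℝ) := by
          intro K hK
          have hTK : Tset d n (extC K) = T := (Finset.mem_filter.mp hK).2
          rw [hcnt]
          simp only [hTK]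
          rw [if_pos hc]
        have hIle : I ≤ phiS (μ p) SE :=
          csInf_le hIbdd (Set.mem_insert_iff.mpr (Or.inr ⟨SE, hne, hconn, htouch, rfl⟩))
        calc I * ∑ K ∈ Φ, Wt p m K.card
            ≤ phiS (μ p) SE * ∑ K ∈ Φ, Wt p m K.card :=
              mul_le_mul_of_nonneg_right hIle hmass0
          _ = ∑ K ∈ Φ, Wt p m K.card * (phiCount SE (extC K) : ℝ) := by
              rw [hfib, ← hphiS, hmass]; ring
          _ = ∑ K ∈ Φ, Wt p m K.card * cnt K :=
              Finset.sum_congr rfl fun K hK => by rw [hcnteq K hK]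
      · -- the singleton case
        have hcnteq : ∀ K ∈ Φ, cnt K = 1 := by
          intro K hK
          have hTK : Tset d n (extC K) = T := (Finset.mem_filter.mp hK).2
          rw [hcnt]
          simp only [hTK]
          rw [if_neg hc]
        calc I * ∑ K ∈ Φ, Wt p m K.card ≤ 1 * ∑ K ∈ Φ, Wt p m K.card :=
              mul_le_mul_of_nonneg_right hIle1 hmass0
          _ = ∑ K ∈ Φ, Wt p m K.card * cnt K := by
              rw [one_mul]
              exact Finset.sum_congr rfl fun K hK => by rw [hcnteq K hK, mul_one]
    rw [h1θ]
    exact le_trans stepB stepA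

end Perc
end

section
/- Holley inequality and FKG lattice condition: let E be a finite set and let μ, ν be strictly positive probability measures on {0,1}^E. (i) If μ(ω ∧ ω′)·ν(ω ∨ ω′) ≥ μ(ω)·ν(ω′) for all ω, ω′ ∈ {0,1}^E, then μ[A] ≤ ν[A] for every increasing event A. (ii) If μ(ω ∧ ω′)·μ(ω ∨ ω′) ≥ μ(ω)·μ(ω′) for all ω, ω′ ∈ {0,1}^E, then μ is positively associated: μ[A ∩ B] ≥ μ[A]·μ[B] for all increasing events A, B. -/
namespace Holley

/-- The one-variable Ahlswede–Daykin inequality. -/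
lemma ad1 (a0 a1 b0 b1 c0 c1 d0 d1 : ℝ)
    (ha0 : 0 ≤ a0) (ha1 : 0 ≤ a1) (hb0 : 0 ≤ b0) (hb1 : 0 ≤ b1)
    (hc0 : 0 ≤ c0) (hc1 : 0 ≤ c1) (hd0 : 0 ≤ d0) (hd1 : 0 ≤ d1)
    (h00 : a0 * b0 ≤ c0 * d0) (h01 : a0 * b1 ≤ c0 * d1)
    (h10 : a1 * b0 ≤ c0 * d1) (h11 : a1 * b1 ≤ c1 * d1) :
    (a0 + a1) * (b0 + b1) ≤ (c0 + c1) * (d0 + d1) := by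
  rcases eq_or_lt_of_le hc0 with hc | hc
  · nlinarith [mul_nonneg ha0 hb0, mul_nonneg ha0 hb1, mul_nonneg ha1 hb0,
      mul_nonneg hc1 hd0]
  rcases eq_or_lt_of_le hd1 with hd | hd
  · nlinarith [mul_nonneg ha0 hb1, mul_nonneg ha1 hb0, mul_nonneg ha1 hb1,
      mul_nonneg hc1 hd0, mul_nonneg hc1 hd1]
  have key : 0 ≤ (c0 * d1 - a0 * b1) * (c0 * d1 - a1 * b0) :=
    mul_nonneg (by linarith) (by linarith)
  have h2 : a0 * b0 * (a1 * b1) ≤ c0 * d0 * (c1 * d1) :=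
    mul_le_mul h00 h11 (mul_nonneg ha1 hb1) (mul_nonneg hc0 hd0)
  have hx : 0 < c0 * d1 := mul_pos hc hd
  nlinarith [mul_le_mul_of_nonneg_right h00 hx.le, mul_le_mul_of_nonneg_right h11 hx.le,
    mul_nonneg (mul_nonneg hc1 hd0) hx.le]

lemma min_cons {n : ℕ} (x y : Bool) (ω ω' : Fin n → Bool) :
    Eq (α := Fin (n+1) → Bool)
      (fun i => min ((Fin.cons x ω : Fin (n+1) → Bool) i)
        ((Fin.cons y ω' : Fin (n+1) → Bool) i))
      (Fin.cons (min x y) (fun j => min (ω j) (ω' j))) := by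
  funext i
  induction i using Fin.cases <;> simp

lemma max_cons {n : ℕ} (x y : Bool) (ω ω' : Fin n → Bool) :
    Eq (α := Fin (n+1) → Bool)
      (fun i => max ((Fin.cons x ω : Fin (n+1) → Bool) i)
        ((Fin.cons y ω' : Fin (n+1) → Bool) i))
      (Fin.cons (max x y) (fun j => max (ω j) (ω' j))) := by
  funext i
  induction i using Fin.cases <;> simp

lemma sum_cons {n : ℕ} (f : (Fin (n+1) → Bool) → ℝ) :
    ∑ ω : Fin (n+1) → Bool, f ω =
      ∑ ω : Fin n → Bool, (f (Fin.cons false ω) + f (Fin.cons true ω)) := by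
  rw [← (Fin.consEquiv (fun _ : Fin (n+1) => Bool)).sum_comp f]
  rw [Fintype.sum_prod_type_right]
  congr 1
  funext ω
  rw [Fintype.sum_bool]
  simp [Fin.consEquiv, add_comm]

/-- Ahlswede–Daykin four functions theorem on `{0,1}^n`. -/
theorem ad_fin (n : ℕ) (a b c d : (Fin n → Bool) → ℝ)
    (ha : ∀ ω, 0 ≤ a ω) (hb : ∀ ω, 0 ≤ b ω) (hc : ∀ ω, 0 ≤ c ω) (hd : ∀ ω, 0 ≤ d ω)
    (h : ∀ ω ω', a ω * b ω' ≤
        c (fun i => min (ω i) (ω' i)) * d (fun i => max (ω i) (ω' i))) :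
    (∑ ω, a ω) * (∑ ω, b ω) ≤ (∑ ω, c ω) * (∑ ω, d ω) := by
  induction n with
  | zero =>
      have e : ∀ ω : Fin 0 → Bool, ω = (fun i => i.elim0) := fun ω => funext fun i => i.elim0
      rw [show (Finset.univ : Finset (Fin 0 → Bool)) = {fun i => i.elim0} from by
        apply Finset.eq_singleton_iff_unique_mem.2
        exact ⟨Finset.mem_univ _, fun x _ => e x⟩]
      simpa using h (fun i => i.elim0) (fun i => i.elim0)
  | succ n ih =>
      rw [sum_cons a, sum_cons b, sum_cons c, sum_cons d]
      apply ih
      · intro ω; exact add_nonneg (ha _) (ha _)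
      · intro ω; exact add_nonneg (hb _) (hb _)
      · intro ω; exact add_nonneg (hc _) (hc _)
      · intro ω; exact add_nonneg (hd _) (hd _)
      intro ω ω'
      apply ad1 _ _ _ _ _ _ _ _ (ha _) (ha _) (hb _) (hb _) (hc _) (hc _) (hd _) (hd _)
      · have := h (Fin.cons false ω) (Fin.cons false ω')
        rwa [min_cons, max_cons] at this
      · have := h (Fin.cons false ω) (Fin.cons true ω')
        rwa [min_cons, max_cons] at this
      · have := h (Fin.cons true ω) (Fin.cons false ω')
        rwa [min_cons, max_cons] at this
      · have := h (Fin.cons true ω) (Fin.cons true ω')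
        rwa [min_cons, max_cons] at this

/-- Ahlswede–Daykin four functions theorem on `{0,1}^E` for a finite set `E`. -/
theorem ad {E : Type*} [Fintype E] [DecidableEq E] (a b c d : (E → Bool) → ℝ)
    (ha : ∀ ω, 0 ≤ a ω) (hb : ∀ ω, 0 ≤ b ω) (hc : ∀ ω, 0 ≤ c ω) (hd : ∀ ω, 0 ≤ d ω)
    (h : ∀ ω ω', a ω * b ω' ≤
        c (fun e => min (ω e) (ω' e)) * d (fun e => max (ω e) (ω' e))) :
    (∑ ω, a ω) * (∑ ω, b ω) ≤ (∑ ω, c ω) * (∑ ω, d ω) := by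
  classical
  set n := Fintype.card E with hn
  let e : E ≃ Fin n := Fintype.equivFin E
  let eqv : (E → Bool) ≃ (Fin n → Bool) := Equiv.arrowCongr e (Equiv.refl Bool)
  have hsum : ∀ f : (E → Bool) → ℝ,
      ∑ ω : E → Bool, f ω = ∑ ω : Fin n → Bool, f (ω ∘ e) := by
    intro f
    apply Fintype.sum_bijective eqv eqv.bijective
    intro ω
    congr 1
    funext x
    simp [eqv, Equiv.arrowCongr]
  rw [hsum a, hsum b, hsum c, hsum d]
  exact ad_fin n _ _ _ _ (fun ω => ha _) (fun ω => hb _) (fun ω => hc _) (fun ω => hd _)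
    (fun ω ω' => h (ω ∘ e) (ω' ∘ e))

/-- An event `A ⊆ {0,1}^E` is increasing if it is stable under opening edges. -/
def Increasing {E : Type*} (A : Set (E → Bool)) : Prop :=
  ∀ ⦃ω ω' : E → Bool⦄, (∀ e, ω e ≤ ω' e) → ω ∈ A → ω' ∈ A

/-- The probability of the event `A` under the measure with weights `μ`. -/
noncomputable def probOf {E : Type*} [Fintype E] [DecidableEq E]
    (μ : (E → Bool) → ℝ) (A : Set (E → Bool)) : ℝ :=
  ∑ ω : E → Bool, A.indicator μ ω

/-- Holley inequality and the FKG lattice condition: for strictly positive probability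
measures `μ, ν` on `{0,1}^E` (E finite):
(i) if `μ(ω ∧ ω′)·ν(ω ∨ ω′) ≥ μ(ω)·ν(ω′)` for all `ω, ω′`, then `μ[A] ≤ ν[A]` for every
increasing event `A`;
(ii) if `μ(ω ∧ ω′)·μ(ω ∨ ω′) ≥ μ(ω)·μ(ω′)` for all `ω, ω′`, then `μ` is positively
associated: `μ[A ∩ B] ≥ μ[A]·μ[B]` for all increasing events `A, B`. -/
theorem holley_and_fkg {E : Type*} [Fintype E] [DecidableEq E]
    (μ ν : (E → Bool) → ℝ)
    (hμpos : ∀ ω, 0 < μ ω) (hνpos : ∀ ω, 0 < ν ω)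
    (hμ1 : ∑ ω : E → Bool, μ ω = 1) (hν1 : ∑ ω : E → Bool, ν ω = 1) :
    ((∀ ω ω' : E → Bool,
        μ ω * ν ω' ≤ μ (fun e => min (ω e) (ω' e)) * ν (fun e => max (ω e) (ω' e))) →
      ∀ A : Set (E → Bool), Increasing A → probOf μ A ≤ probOf ν A) ∧
    ((∀ ω ω' : E → Bool,
        μ ω * μ ω' ≤ μ (fun e => min (ω e) (ω' e)) * μ (fun e => max (ω e) (ω' e))) →
      ∀ A B : Set (E → Bool), Increasing A → Increasing B →
        probOf μ A * probOf μ B ≤ probOf μ (A ∩ B)) := by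
  classical
  constructor
  · intro h A hA
    have key := ad (A.indicator μ) ν μ (A.indicator ν)
      (fun ω => Set.indicator_nonneg (fun x _ => (hμpos x).le) ω)
      (fun ω => (hνpos ω).le) (fun ω => (hμpos ω).le)
      (fun ω => Set.indicator_nonneg (fun x _ => (hνpos x).le) ω)
      ?_
    · rw [hν1, hμ1, mul_one, one_mul] at key
      exact key
    intro ω ω'
    by_cases hω : ω ∈ A
    · have hmem : (fun e => max (ω e) (ω' e)) ∈ A :=
        hA (fun e => le_max_left _ _) hω
      rw [Set.indicator_of_mem hω, Set.indicator_of_mem hmem]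
      exact h ω ω'
    · rw [Set.indicator_of_notMem hω, zero_mul]
      exact mul_nonneg (hμpos _).le
        (Set.indicator_nonneg (fun x _ => (hνpos x).le) _)
  · intro h A B hA hB
    have key := ad (A.indicator μ) (B.indicator μ) μ
      ((A ∩ B).indicator μ)
      (fun ω => Set.indicator_nonneg (fun x _ => (hμpos x).le) ω)
      (fun ω => Set.indicator_nonneg (fun x _ => (hμpos x).le) ω)
      (fun ω => (hμpos ω).le)
      (fun ω => Set.indicator_nonneg (fun x _ => (hμpos x).le) ω)
      ?_
    · rw [hμ1, one_mul] at key
      exact key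
    intro ω ω'
    by_cases hω : ω ∈ A
    · by_cases hω' : ω' ∈ B
      · have hmem : (fun e => max (ω e) (ω' e)) ∈ A ∩ B :=
          ⟨hA (fun e => le_max_left _ _) hω, hB (fun e => le_max_right _ _) hω'⟩
        rw [Set.indicator_of_mem hω, Set.indicator_of_mem hω',
          Set.indicator_of_mem hmem]
        exact h ω ω'
      · rw [Set.indicator_of_notMem hω', mul_zero]
        exact mul_nonneg (hμpos _).le
          (Set.indicator_nonneg (fun x _ => (hμpos x).le) _)
    · rw [Set.indicator_of_notMem hω, zero_mul]
      exact mul_nonneg (hμpos _).le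
        (Set.indicator_nonneg (fun x _ => (hμpos x).le) _)

end Holley
end

section
/- Positive association (FKG) for FK-percolation: for every finite graph G = (V,E), every boundary set B ⊆ V and boundary condition ξ (a partition of B), every p ∈ (0,1), every q ≥ 1, and all increasing events A, A′ ⊆ {0,1}^E, one has φ^ξ_{G,p,q}[A ∩ A′] ≥ φ^ξ_{G,p,q}[A] · φ^ξ_{G,p,q}[A′]. -/
namespace FK

/-- An event `A ⊆ {0,1}^E` is increasing if it is stable under opening edges. -/
def Increasing {E : Type*} (A : Set (E → Bool)) : Prop :=
  ∀ ⦃ω ω' : E → Bool⦄, (∀ e, ω e ≤ ω' e) → ω ∈ A → ω' ∈ A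

variable {V Eg : Type*}

/-- Two vertices are related in one step if they are joined by an open edge, or if they
lie in a common class of the boundary condition `ξ`. -/
def fkStep [DecidableEq V] (ends : Eg → Sym2 V) {B : Finset V} (ξ : Finpartition B)
    (ω : Eg → Bool) (x y : V) : Prop :=
  (∃ e : Eg, ω e = true ∧ ends e = s(x, y)) ∨ ∃ t ∈ ξ.parts, x ∈ t ∧ y ∈ t

/-- `k(ω^ξ)`: the number of connected components of the spanning subgraph of open edges
after identifying, for each class of `ξ`, all vertices of that class (isolated vertices
count as components). -/
noncomputable def numComp [DecidableEq V] (ends : Eg → Sym2 V) {B : Finset V}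
    (ξ : Finpartition B) (ω : Eg → Bool) : ℕ :=
  Set.ncard {C : Set V | ∃ x, C = {y | Relation.EqvGen (fkStep ends ξ ω) x y}}

/-- The FK weight `p^{|ω|} (1−p)^{|E∖ω|} q^{k(ω^ξ)}` of a configuration `ω`. -/
noncomputable def fkWeight [DecidableEq V] [Fintype Eg] (ends : Eg → Sym2 V)
    {B : Finset V} (ξ : Finpartition B) (p q : ℝ) (ω : Eg → Bool) : ℝ :=
  p ^ (Finset.univ.filter fun e : Eg => ω e = true).card *
    (1 - p) ^ (Finset.univ.filter fun e : Eg => ω e = false).card *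
    q ^ numComp ends ξ ω

/-- `φ^ξ_{G,p,q}[A]`: the FK-percolation probability of the event `A`. -/
noncomputable def fkProb [DecidableEq V] [Fintype Eg] [DecidableEq Eg]
    (ends : Eg → Sym2 V) {B : Finset V} (ξ : Finpartition B) (p q : ℝ)
    (A : Set (Eg → Bool)) : ℝ :=
  (∑ ω : Eg → Bool, A.indicator (fkWeight ends ξ p q) ω) /
    ∑ ω : Eg → Bool, fkWeight ends ξ p q ω

set_option linter.unusedSectionVars false
section Aux
variable [Fintype V] [DecidableEq V] [Fintype Eg] [DecidableEq Eg] (ends : Eg → Sym2 V) {B : Finset V}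
  (ξ : Finpartition B)

abbrev Rel (ω : Eg → Bool) : V → V → Prop := Relation.EqvGen (fkStep ends ξ ω)

def fkSetoid (ω : Eg → Bool) : Setoid V :=
  ⟨Rel ends ξ ω, Relation.EqvGen.is_equivalence _⟩

lemma relEquiv (ω : Eg → Bool) : Equivalence (Rel ends ξ ω) :=
  Relation.EqvGen.is_equivalence _

lemma rel_mono {ω ω' : Eg → Bool} (h : ∀ e, ω e ≤ ω' e) {a b : V}
    (hab : Rel ends ξ ω a b) : Rel ends ξ ω' a b := by
  refine Relation.EqvGen.mono (fun a b hab => ?_) _ _ hab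
  rcases hab with ⟨e, he, hee⟩ | h2
  · exact Or.inl ⟨e, by have := h e; rw [he] at this; exact (le_antisymm this (Bool.le_true _)).symm ▸ rfl, hee⟩
  · exact Or.inr h2

lemma numComp_eq (ω : Eg → Bool) :
    numComp ends ξ ω = Nat.card (Quotient (fkSetoid ends ξ ω)) := by
  classical
  set F : Quotient (fkSetoid ends ξ ω) → Set V :=
    Quotient.lift (fun x => {y | Rel ends ξ ω x y}) (by
      intro a b hab
      ext z
      have h := (Relation.EqvGen.is_equivalence (fkStep ends ξ ω))
      exact ⟨fun hz => h.trans (h.symm hab) hz, fun hz => h.trans hab hz⟩) with hF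
  have hFinj : Function.Injective F := by
    intro c₁ c₂ hc
    induction c₁ using Quotient.ind
    induction c₂ using Quotient.ind
    rename_i a b
    have h := (Relation.EqvGen.is_equivalence (fkStep ends ξ ω))
    have : b ∈ {y | Rel ends ξ ω a y} := by
      rw [show {y | Rel ends ξ ω a y} = F (Quotient.mk _ a) from rfl, hc]
      exact h.refl b
    exact Quotient.sound this
  have hset : {C : Set V | ∃ x, C = {y | Relation.EqvGen (fkStep ends ξ ω) x y}}
      = Set.range F := by
    ext C
    constructor
    · rintro ⟨x, rfl⟩; exact ⟨Quotient.mk _ x, rfl⟩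
    · rintro ⟨c, rfl⟩
      induction c using Quotient.ind
      exact ⟨_, rfl⟩
  rw [numComp, hset, ← Nat.card_coe_set_eq, Nat.card_range_of_injective hFinj]

lemma le_update (ω : Eg → Bool) (e : Eg) (e' : Eg) : ω e' ≤ Function.update ω e true e' := by
  rcases eq_or_ne e' e with rfl | h
  · simp
  · simp [Function.update_of_ne h]

/-- Lemma P: structure of connectivity after adding one edge. -/
lemma rel_update_cases {ω : Eg → Bool} {e : Eg} {x y : V} (hxy : ends e = s(x, y)) {a b : V}
    (h : Rel ends ξ (Function.update ω e true) a b) :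
    Rel ends ξ ω a b ∨ (Rel ends ξ ω a x ∧ Rel ends ξ ω b y) ∨
      (Rel ends ξ ω a y ∧ Rel ends ξ ω b x) := by
  set R := Rel ends ξ ω with hR
  have hE : Equivalence R := relEquiv ends ξ ω
  set P : V → V → Prop := fun a b => R a b ∨ (R a x ∧ R b y) ∨ (R a y ∧ R b x) with hP
  have hPE : Equivalence P := by
    constructor
    · intro a; exact Or.inl (hE.refl a)
    · rintro a b (h | ⟨h1, h2⟩ | ⟨h1, h2⟩)
      · exact Or.inl (hE.symm h)
      · exact Or.inr (Or.inr ⟨h2, h1⟩)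
      · exact Or.inr (Or.inl ⟨h2, h1⟩)
    · rintro a b c (h | ⟨h1, h2⟩ | ⟨h1, h2⟩) (g | ⟨g1, g2⟩ | ⟨g1, g2⟩)
      · exact Or.inl (hE.trans h g)
      · exact Or.inr (Or.inl ⟨hE.trans h g1, g2⟩)
      · exact Or.inr (Or.inr ⟨hE.trans h g1, g2⟩)
      · exact Or.inr (Or.inl ⟨h1, hE.trans (hE.symm g) h2⟩)
      · exact Or.inl (hE.trans (hE.trans h1 (hE.symm g1)) (hE.trans h2 (hE.symm g2)))
      · exact Or.inl (hE.trans h1 (hE.symm g2))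
      · exact Or.inr (Or.inr ⟨h1, hE.trans (hE.symm g) h2⟩)
      · exact Or.inl (hE.trans h1 (hE.symm g2))
      · exact Or.inl (hE.trans (hE.trans h1 (hE.symm g1)) (hE.trans h2 (hE.symm g2)))
  have hstep : ∀ a b, fkStep ends ξ (Function.update ω e true) a b → P a b := by
    rintro a b (⟨e', he', hee'⟩ | hbd)
    · rcases eq_or_ne e' e with rfl | hne
      · rw [hxy] at hee'
        rcases Sym2.eq_iff.mp hee' with ⟨rfl, rfl⟩ | ⟨rfl, rfl⟩
        · exact Or.inr (Or.inl ⟨hE.refl _, hE.refl _⟩)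
        · exact Or.inr (Or.inr ⟨hE.refl _, hE.refl _⟩)
      · rw [Function.update_of_ne hne] at he'
        exact Or.inl (Relation.EqvGen.rel _ _ (Or.inl ⟨e', he', hee'⟩))
    · exact Or.inl (Relation.EqvGen.rel _ _ (Or.inr hbd))
  exact hPE.eqvGen_iff.mp (Relation.EqvGen.mono hstep _ _ h)

/-- If the endpoints are already connected, adding the edge does not change the relation. -/
lemma rel_update_of_connected {ω : Eg → Bool} {e : Eg} {x y : V} (hxy : ends e = s(x, y))
    (hc : Rel ends ξ ω x y) {a b : V}
    (h : Rel ends ξ (Function.update ω e true) a b) : Rel ends ξ ω a b := by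
  have hE : Equivalence (Rel ends ξ ω) := relEquiv ends ξ ω
  have hstep : ∀ a b, fkStep ends ξ (Function.update ω e true) a b → Rel ends ξ ω a b := by
    rintro a b (⟨e', he', hee'⟩ | hbd)
    · rcases eq_or_ne e' e with rfl | hne
      · rw [hxy] at hee'
        rcases Sym2.eq_iff.mp hee' with ⟨rfl, rfl⟩ | ⟨rfl, rfl⟩
        · exact hc
        · exact hE.symm hc
      · rw [Function.update_of_ne hne] at he'
        exact Relation.EqvGen.rel _ _ (Or.inl ⟨e', he', hee'⟩)
    · exact Relation.EqvGen.rel _ _ (Or.inr hbd)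
  exact hE.eqvGen_iff.mp (Relation.EqvGen.mono hstep _ _ h)


def qmap {ω ω' : Eg → Bool} (h : ∀ e, ω e ≤ ω' e) :
    Quotient (fkSetoid ends ξ ω) → Quotient (fkSetoid ends ξ ω') :=
  Quotient.lift (Quotient.mk _) (fun _ _ hab => Quotient.sound (rel_mono ends ξ h hab))

lemma qmap_surjective {ω ω' : Eg → Bool} (h : ∀ e, ω e ≤ ω' e) :
    Function.Surjective (qmap ends ξ h) := by
  intro c
  induction c using Quotient.ind
  exact ⟨Quotient.mk _ _, rfl⟩

lemma numComp_antitone {ω ω' : Eg → Bool} (h : ∀ e, ω e ≤ ω' e) :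
    numComp ends ξ ω' ≤ numComp ends ξ ω := by
  rw [numComp_eq, numComp_eq]
  exact Nat.card_le_card_of_surjective _ (qmap_surjective ends ξ h)

lemma numComp_update_bounds {ω : Eg → Bool} {e : Eg} {x y : V} (hxy : ends e = s(x, y)) :
    numComp ends ξ ω ≤ numComp ends ξ (Function.update ω e true) + 1 ∧
      (¬ Rel ends ξ ω x y →
        numComp ends ξ ω = numComp ends ξ (Function.update ω e true) + 1) := by
  classical
  set s₁ := fkSetoid ends ξ ω with hs₁
  set s₂ := fkSetoid ends ξ (Function.update ω e true) with hs₂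
  set π := qmap ends ξ (le_update ω e) with hπ
  set g : Quotient s₁ → Option (Quotient s₂) :=
    fun c => if c = Quotient.mk s₁ y then none else some (π c) with hg
  have hginj : Function.Injective g := by
    intro c₁ c₂ hgc
    induction c₁ using Quotient.ind
    induction c₂ using Quotient.ind
    rename_i a b
    by_cases h₁ : Quotient.mk s₁ a = Quotient.mk s₁ y
    · by_cases h₂ : Quotient.mk s₁ b = Quotient.mk s₁ y
      · exact h₁.trans h₂.symm
      · rw [hg] at hgc
        simp only [if_pos h₁, if_neg h₂] at hgc
        exact absurd hgc (by simp)
    · by_cases h₂ : Quotient.mk s₁ b = Quotient.mk s₁ y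
      · rw [hg] at hgc
        simp only [if_pos h₂, if_neg h₁] at hgc
        exact absurd hgc (by simp)
      · rw [hg] at hgc
        simp only [if_neg h₁, if_neg h₂, Option.some.injEq] at hgc
        have hab : Rel ends ξ (Function.update ω e true) a b :=
          Quotient.exact (s := s₂) hgc
        rcases rel_update_cases ends ξ hxy hab with h | ⟨hax, hby⟩ | ⟨hay, hbx⟩
        · exact Quotient.sound h
        · exact absurd (Quotient.sound hby) h₂
        · exact absurd (Quotient.sound hay) h₁
  have h1 : numComp ends ξ ω ≤ numComp ends ξ (Function.update ω e true) + 1 := by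
    rw [numComp_eq, numComp_eq]
    have := Nat.card_le_card_of_injective g hginj
    rwa [Finite.card_option] at this
  refine ⟨h1, fun hnc => ?_⟩
  have hgsurj : Function.Surjective g := by
    rintro (_ | d)
    · exact ⟨Quotient.mk s₁ y, by simp [hg]⟩
    · induction d using Quotient.ind
      rename_i a
      have hxy' : Rel ends ξ (Function.update ω e true) x y :=
        Relation.EqvGen.rel _ _ (Or.inl ⟨e, Function.update_self _ _ _, hxy⟩)
      by_cases hay : Rel ends ξ ω a y
      · refine ⟨Quotient.mk s₁ x, ?_⟩
        have hxne : Quotient.mk s₁ x ≠ Quotient.mk s₁ y := fun h => hnc (Quotient.exact h)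
        have hrel : Rel ends ξ (Function.update ω e true) x a :=
          (relEquiv ends ξ _).trans hxy'
            (rel_mono ends ξ (le_update ω e) ((relEquiv ends ξ ω).symm hay))
        simp only [hg, if_neg hxne, Option.some.injEq]
        exact Quotient.sound hrel
      · refine ⟨Quotient.mk s₁ a, ?_⟩
        have hane : Quotient.mk s₁ a ≠ Quotient.mk s₁ y := fun h => hay (Quotient.exact h)
        simp only [hg, if_neg hane]
        rfl
  have hcard := Nat.card_eq_of_bijective g ⟨hginj, hgsurj⟩
  rw [Finite.card_option] at hcard
  rw [numComp_eq, numComp_eq]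
  exact hcard

lemma numComp_update_of_connected {ω : Eg → Bool} {e : Eg} {x y : V}
    (hxy : ends e = s(x, y)) (hc : Rel ends ξ ω x y) :
    numComp ends ξ (Function.update ω e true) = numComp ends ξ ω := by
  have hsets : fkSetoid ends ξ (Function.update ω e true) = fkSetoid ends ξ ω :=
    Setoid.ext fun a b =>
      ⟨rel_update_of_connected ends ξ hxy hc, rel_mono ends ξ (le_update ω e)⟩
  rw [numComp_eq, numComp_eq, hsets]

lemma lemmaA {η ζ : Eg → Bool} (hle : ∀ e', η e' ≤ ζ e') (e : Eg) :
    numComp ends ξ (Function.update η e true) + numComp ends ξ ζ ≤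
      numComp ends ξ η + numComp ends ξ (Function.update ζ e true) := by
  obtain ⟨x, y, hxy⟩ : ∃ x y, ends e = s(x, y) := by
    have hz : ∃ z : Sym2 V, ends e = z := ⟨ends e, rfl⟩
    exact Sym2.exists.mp hz
  by_cases hc : Rel ends ξ ζ x y
  · have h1 : numComp ends ξ (Function.update η e true) ≤ numComp ends ξ η :=
      numComp_antitone ends ξ (le_update η e)
    have h2 := numComp_update_of_connected ends ξ hxy hc
    omega
  · have hcη : ¬ Rel ends ξ η x y := fun h => hc (rel_mono ends ξ hle h)
    have h1 := (numComp_update_bounds ends ξ hxy).2 hcη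
    have h2 := (numComp_update_bounds ends ξ (ω := ζ) hxy).1
    omega

lemma numComp_supermodular (ω ω' : Eg → Bool) :
    numComp ends ξ ω + numComp ends ξ ω' ≤
      numComp ends ξ (ω ⊓ ω') + numComp ends ξ (ω ⊔ ω') := by
  classical
  suffices H : ∀ n (ω ω' : Eg → Bool),
      (Finset.univ.filter fun e => ω e = true ∧ ω' e = false).card = n →
      numComp ends ξ ω + numComp ends ξ ω' ≤
        numComp ends ξ (ω ⊓ ω') + numComp ends ξ (ω ⊔ ω') by
    exact H ((Finset.univ.filter fun e => ω e = true ∧ ω' e = false).card) ω ω' rfl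
  intro n
  induction n with
  | zero =>
    intro ω ω' h0
    have hle : ω ≤ ω' := by
      intro e
      rcases h1 : ω e with _ | _
      · exact Bool.false_le _
      · rcases h2 : ω' e with _ | _
        · exfalso
          have : e ∈ Finset.univ.filter fun e => ω e = true ∧ ω' e = false := by
            simp [h1, h2]
          rw [Finset.card_eq_zero] at h0
          simp [h0] at this
        · simp [h2]
    rw [inf_eq_left.mpr hle, sup_eq_right.mpr hle]
  | succ n ih =>
    intro ω ω' hcard
    obtain ⟨e, he⟩ : (Finset.univ.filter fun e => ω e = true ∧ ω' e = false).Nonempty := by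
      rw [← Finset.card_pos, hcard]; omega
    simp only [Finset.mem_filter, Finset.mem_univ, true_and] at he
    obtain ⟨he1, he2⟩ := he
    set ω₀ := Function.update ω e false with hω₀
    have hω : Function.update ω₀ e true = ω := by
      funext e'
      rcases eq_or_ne e' e with rfl | h
      · simp [he1]
      · simp [Function.update_of_ne h, hω₀]
    have hfilter : (Finset.univ.filter fun e' => ω₀ e' = true ∧ ω' e' = false)
        = (Finset.univ.filter fun e' => ω e' = true ∧ ω' e' = false).erase e := by
      ext e'
      rcases eq_or_ne e' e with rfl | h
      · simp [hω₀]
      · simp [Finset.mem_erase, h, Function.update_of_ne h, hω₀]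
    have hcard₀ : (Finset.univ.filter fun e' => ω₀ e' = true ∧ ω' e' = false).card = n := by
      rw [hfilter, Finset.card_erase_of_mem (by simp [he1, he2]), hcard]
      omega
    have hinf : ω₀ ⊓ ω' = ω ⊓ ω' := by
      funext e'
      rcases eq_or_ne e' e with rfl | h
      · simp [Pi.inf_apply, hω₀, he1, he2]
      · simp [Pi.inf_apply, Function.update_of_ne h, hω₀]
    have hsup : Function.update (ω₀ ⊔ ω') e true = ω ⊔ ω' := by
      funext e'
      rcases eq_or_ne e' e with rfl | h
      · simp [Pi.sup_apply, he1]
      · simp [Pi.sup_apply, Function.update_of_ne h, hω₀]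
    have hle : ∀ e', ω₀ e' ≤ (ω₀ ⊔ ω') e' := fun e' => le_sup_left
    have hA := lemmaA ends ξ hle e
    rw [hω, hsup] at hA
    have hIH := ih ω₀ ω' hcard₀
    rw [hinf] at hIH
    omega

lemma card_true_add (ω ω' : Eg → Bool) :
    (Finset.univ.filter fun e : Eg => (ω ⊓ ω') e = true).card +
      (Finset.univ.filter fun e : Eg => (ω ⊔ ω') e = true).card
    = (Finset.univ.filter fun e : Eg => ω e = true).card +
      (Finset.univ.filter fun e : Eg => ω' e = true).card := by
  classical
  simp only [Finset.card_filter]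
  rw [← Finset.sum_add_distrib, ← Finset.sum_add_distrib]
  refine Finset.sum_congr rfl fun e _ => ?_
  cases h1 : ω e <;> cases h2 : ω' e <;>
    simp [Pi.inf_apply, Pi.sup_apply, h1, h2]

lemma card_false_add (ω ω' : Eg → Bool) :
    (Finset.univ.filter fun e : Eg => (ω ⊓ ω') e = false).card +
      (Finset.univ.filter fun e : Eg => (ω ⊔ ω') e = false).card
    = (Finset.univ.filter fun e : Eg => ω e = false).card +
      (Finset.univ.filter fun e : Eg => ω' e = false).card := by
  classical
  simp only [Finset.card_filter]
  rw [← Finset.sum_add_distrib, ← Finset.sum_add_distrib]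
  refine Finset.sum_congr rfl fun e _ => ?_
  cases h1 : ω e <;> cases h2 : ω' e <;>
    simp [Pi.inf_apply, Pi.sup_apply, h1, h2]

lemma fkWeight_mul_fkWeight_le {p q : ℝ} (hp : p ∈ Set.Ioo (0 : ℝ) 1) (hq : 1 ≤ q)
    (ω ω' : Eg → Bool) :
    fkWeight ends ξ p q ω * fkWeight ends ξ p q ω' ≤
      fkWeight ends ξ p q (ω ⊓ ω') * fkWeight ends ξ p q (ω ⊔ ω') := by
  have hp0 : (0 : ℝ) < p := hp.1
  have hp1 : (0 : ℝ) < 1 - p := by have := hp.2; linarith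
  have hq0 : (0 : ℝ) < q := lt_of_lt_of_le one_pos hq
  have key : ∀ (a b c a' b' c' : ℕ),
      (p ^ a * (1 - p) ^ b * q ^ c) * (p ^ a' * (1 - p) ^ b' * q ^ c')
        = p ^ (a + a') * (1 - p) ^ (b + b') * q ^ (c + c') := by
    intros; rw [pow_add, pow_add, pow_add]; ring
  unfold fkWeight
  rw [key, key, card_true_add, card_false_add]
  have hsm := numComp_supermodular ends ξ ω ω'
  gcongr

end Aux

/-- Positive association (FKG) for FK-percolation: for every finite graph `G = (V,E)`,
boundary condition `ξ` on `B ⊆ V`, `p ∈ (0,1)`, `q ≥ 1` and increasing events `A, A′`,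
`φ^ξ_{G,p,q}[A ∩ A′] ≥ φ^ξ_{G,p,q}[A] · φ^ξ_{G,p,q}[A′]`. -/
theorem fk_positive_association [Fintype V] [DecidableEq V] [Fintype Eg] [DecidableEq Eg]
    (ends : Eg → Sym2 V) (B : Finset V) (ξ : Finpartition B)
    (p : ℝ) (hp : p ∈ Set.Ioo (0 : ℝ) 1) (q : ℝ) (hq : 1 ≤ q)
    (A A' : Set (Eg → Bool)) (hA : Increasing A) (hA' : Increasing A') :
    fkProb ends ξ p q A * fkProb ends ξ p q A' ≤ fkProb ends ξ p q (A ∩ A') := by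
  classical
  have hp0 : (0 : ℝ) < p := hp.1
  have hp1 : (0 : ℝ) < 1 - p := by have := hp.2; linarith
  have hq0 : (0 : ℝ) < q := lt_of_lt_of_le one_pos hq
  have hwpos : ∀ ω : Eg → Bool, 0 < fkWeight ends ξ p q ω := fun ω =>
    mul_pos (mul_pos (pow_pos hp0 _) (pow_pos hp1 _)) (pow_pos hq0 _)
  have hZ : 0 < ∑ ω : Eg → Bool, fkWeight ends ξ p q ω :=
    Finset.sum_pos (fun ω _ => hwpos ω) Finset.univ_nonempty
  have hnn : ∀ (S : Set (Eg → Bool)), 0 ≤ S.indicator (fkWeight ends ξ p q) := fun S x =>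
    Set.indicator_nonneg (fun a _ => (hwpos a).le) x
  have hmain : ∀ a b : Eg → Bool,
      A.indicator (fkWeight ends ξ p q) a * A'.indicator (fkWeight ends ξ p q) b ≤
        fkWeight ends ξ p q (a ⊓ b) * (A ∩ A').indicator (fkWeight ends ξ p q) (a ⊔ b) := by
    intro a b
    by_cases ha : a ∈ A
    · by_cases hb : b ∈ A'
      · rw [Set.indicator_of_mem ha, Set.indicator_of_mem hb, Set.indicator_of_mem]
        · exact fkWeight_mul_fkWeight_le ends ξ hp hq a b
        · exact ⟨hA (fun e => le_sup_left) ha, hA' (fun e => le_sup_right) hb⟩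
      · rw [Set.indicator_of_notMem hb, mul_zero]
        exact mul_nonneg (hwpos _).le (hnn _ _)
    · rw [Set.indicator_of_notMem ha, zero_mul]
      exact mul_nonneg (hwpos _).le (hnn _ _)
  have key := four_functions_theorem_univ (A.indicator (fkWeight ends ξ p q))
    (A'.indicator (fkWeight ends ξ p q)) (fkWeight ends ξ p q)
    ((A ∩ A').indicator (fkWeight ends ξ p q))
    (hnn A) (hnn A') (fun ω => (hwpos ω).le) (hnn _) hmain
  simp only [fkProb]
  rw [div_mul_div_comm, div_le_div_iff₀ (mul_pos hZ hZ) hZ]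
  calc (∑ ω : Eg → Bool, A.indicator (fkWeight ends ξ p q) ω) *
        (∑ ω : Eg → Bool, A'.indicator (fkWeight ends ξ p q) ω) *
        (∑ ω : Eg → Bool, fkWeight ends ξ p q ω)
      ≤ ((∑ ω : Eg → Bool, fkWeight ends ξ p q ω) *
          (∑ ω : Eg → Bool, (A ∩ A').indicator (fkWeight ends ξ p q) ω)) *
        (∑ ω : Eg → Bool, fkWeight ends ξ p q ω) :=
        mul_le_mul_of_nonneg_right key hZ.le
    _ = (∑ ω : Eg → Bool, (A ∩ A').indicator (fkWeight ends ξ p q) ω) *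
        ((∑ ω : Eg → Bool, fkWeight ends ξ p q ω) *
          (∑ ω : Eg → Bool, fkWeight ends ξ p q ω)) := by ring
end FK
end
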